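/- arXiv:2405.03835 — 14 statements merged into one kernel-verified Lean document; each statement's English description precedes it below -/
import Mathlib

section
/- Let S be a semigroup and σ : S → S an involutive automorphism. The pairs f, g : S → ℂ with g ≠ 0 satisfying f(xy) + f(σ(y)x) = 2 f(x) g(y) for all x, y ∈ S are exactly the following: (1) f = 0 and g ≠ 0 arbitrary; (2) f = α χ + β χ* and g = (χ + χ*)/2, where χ : S → ℂ is a nonzero multiplicative function and α, β ∈ ℂ are constants with (α, β) ≠ (0, 0); (3) f = γ₁ χ + φ and g = χ, where γ₁ ∈ ℂ is a constant, χ : S → ℂ is a nonzero multiplicative function, and φ is a nonzero solution of the special sine addition law φ(xy) = φ(x)χ(y) + φ(y)χ(x) such that χ* = χ and φ* = −φ. -/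
/-!
For a solution `(f, g)`, every defect `φₓ(y) = f(xy) - f(x) g(y)` solves the sine addition law
`φₓ(yz) = φₓ(y) g(z) + φₓ(z) g(y)`, and associativity then forces
`g(yz) - g(y) g(z) = μ φₓ(y) φₓ(z)` as soon as `φₓ ≠ 0`.

If all `φₓ` vanish, `f` is a multiple of `g`, and `g` is multiplicative. If `g` is multiplicative,
all `φₓ` are multiples `g(x) ψ` of a single sine function `ψ`, which gives the third family.
Otherwise `μ ≠ 0`, and for `ν² = μ` the functions `χ± = g ± νφ` are multiplicative. Then `f`
splits as `A + B`, where `A(xy) = A(x) χ₊(y)` and `B(xy) = B(x) χ₋(y)`. Since `χ₊ ≠ χ₋`, the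
equation splits into one equation for `A` and one for `B`. These force `χ₋ = χ₊ ∘ σ` and make `A`
and `B` multiples of `χ₊` and `χ₋`.
-/

open Function

section

variable {S K : Type*} [Semigroup S] [Field K]

def mulDefect (f g : S → K) (x y : S) : K := f (x * y) - f x * g y

def IsSineAddition (φ g : S → K) : Prop := ∀ x y, φ (x * y) = φ x * g y + φ y * g x

namespace IsSineAddition

variable {φ ψ g : S → K}

theorem mul_mulDefect_comm (hφ : IsSineAddition φ g) (y z w : S) :
    φ y * mulDefect g g z w = φ w * mulDefect g g y z := by
  have h := hφ (y * z) w
  rw [mul_assoc, hφ y (z * w), hφ y z, hφ z w] at h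
  unfold mulDefect
  linear_combination h

theorem exists_mulDefect_eq (hφ : IsSineAddition φ g) {w : S} (hw : φ w ≠ 0) :
    ∃ μ : K, ∀ y z, mulDefect g g y z = μ * φ y * φ z := by
  refine ⟨mulDefect g g w w / φ w ^ 2, fun y z => ?_⟩
  have h₁ := hφ.mul_mulDefect_comm y z w
  have h₂ := hφ.mul_mulDefect_comm z w w
  field_simp
  linear_combination -φ w * h₁ - φ y * h₂

theorem mul_eq_mul_of_mulDefect_ne_zero (hφ : IsSineAddition φ g) (hψ : IsSineAddition ψ g)
    {z w : S} (hzw : mulDefect g g z w ≠ 0) (y : S) : ψ y * φ w = ψ w * φ y := by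
  have h₁ := hφ.mul_mulDefect_comm y z w
  have h₂ := hψ.mul_mulDefect_comm y z w
  apply mul_right_cancel₀ hzw
  linear_combination φ w * h₂ - ψ w * h₁

theorem add_mul_map_mul (hφ : IsSineAddition φ g) {μ ν : K}
    (hΔ : ∀ y z, mulDefect g g y z = μ * φ y * φ z) (hν : ν ^ 2 = μ) (x y : S) :
    g (x * y) + ν * φ (x * y) = (g x + ν * φ x) * (g y + ν * φ y) := by
  have h := hΔ x y
  unfold mulDefect at h
  rw [hφ x y]
  linear_combination h - φ x * φ y * hν

end IsSineAddition

theorem eq_div_mul_of_mul_eq_mul {α : Type*} {u v p : α → K} {b : α} (hb : p b ≠ 0)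
    (H : ∀ x y, u y * p x = v x * p y) (x : α) :
    v x = v b / p b * p x ∧ u x = v b / p b * p x := by
  have hub : u b = v b := mul_right_cancel₀ hb (H b b)
  have h₁ := H x b
  have h₂ := H b x
  constructor <;> field_simp
  · linear_combination -h₁ + p x * hub
  · linear_combination h₂

theorem eq_comp_of_mul_comp_eq_mul {α : Type*} {σ : α → α} (hσ : Involutive σ) {a p q : α → K}
    (ha : a ≠ 0) (H : ∀ x y, a (σ y) * p x = a x * q y) (y : α) : q y = p (σ y) := by
  obtain ⟨x₁, hx₁⟩ := ne_iff.mp ha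
  have h₁ := H x₁ y
  have h₂ := H (σ y) (σ x₁)
  have h₃ := H x₁ (σ x₁)
  rw [hσ] at h₂ h₃
  have hpq : p x₁ = q (σ x₁) := mul_left_cancel₀ hx₁ h₃
  apply mul_left_cancel₀ hx₁
  linear_combination -h₁ + a (σ y) * hpq - h₂

theorem eigen_eq_zero_of_add_eq_zero {χ₁ χ₂ u v : S → K} {t : S} (ht : χ₁ t ≠ χ₂ t)
    (hu : ∀ x y, u (x * y) = u x * χ₁ y) (hv : ∀ x y, v (x * y) = v x * χ₂ y)
    (huv : ∀ x, u x + v x = 0) (x : S) : u x = 0 := by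
  have h₁ := huv (x * t)
  rw [hu, hv] at h₁
  have h₂ := huv x
  apply mul_left_cancel₀ (sub_ne_zero.2 ht)
  linear_combination h₁ - χ₂ t * h₂

section VariantWilson

variable {σ : S → S} {f g : S → K}

def VariantWilson (σ : S → S) (f g : S → K) : Prop :=
  ∀ x y, f (x * y) + f (σ y * x) = 2 * f x * g y

def IsExponentialSolution (σ : S → S) (f g : S → K) : Prop :=
  ∃ (χ : S → K) (α β : K), (∀ x y, χ (x * y) = χ x * χ y) ∧ χ ≠ 0 ∧ (α, β) ≠ (0, 0) ∧
    (∀ x, f x = α * χ x + β * χ (σ x)) ∧ (∀ x, g x = (χ x + χ (σ x)) / 2)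

def IsSineSolution (σ : S → S) (f g : S → K) : Prop :=
  ∃ (χ φ : S → K) (γ : K), (∀ x y, χ (x * y) = χ x * χ y) ∧ χ ≠ 0 ∧
    φ ≠ 0 ∧ IsSineAddition φ χ ∧ (∀ x, χ (σ x) = χ x) ∧ (∀ x, φ (σ x) = -φ x) ∧
    (∀ x, f x = γ * χ x + φ x) ∧ g = χ

theorem IsExponentialSolution.variantWilson [CharZero K] (hσmul : ∀ x y, σ (x * y) = σ x * σ y)
    (hσ : Involutive σ) (h : IsExponentialSolution σ f g) : VariantWilson σ f g := by
  obtain ⟨χ, α, β, hχ, -, -, hf, hg⟩ := h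
  intro x y
  simp only [hf, hg, hχ, hσmul, hσ y]
  ring

theorem IsSineSolution.variantWilson (h : IsSineSolution σ f g) : VariantWilson σ f g := by
  obtain ⟨χ, φ, γ, hχ, -, -, hφ, hχσ, hφσ, hf, rfl⟩ := h
  intro x y
  simp only [hf, hφ _ _, hχ, hχσ, hφσ]
  ring

namespace VariantWilson

theorem isExponentialSolution_of_mulDefect_eq_zero [CharZero K] (hE : VariantWilson σ f g)
    (hf : f ≠ 0) (hg : g ≠ 0) (h : ∀ x y, mulDefect f g x y = 0) : IsExponentialSolution σ f g := by
  have hfg : ∀ x y, f (x * y) = f x * g y := fun x y => sub_eq_zero.1 (h x y)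
  obtain ⟨b, hb⟩ := ne_iff.mp hg
  have H : ∀ x y, f (σ y) * g x = f x * g y := by
    intro x y
    have h := hE x y
    rw [hfg, hfg] at h
    linear_combination h
  have hc := eq_div_mul_of_mul_eq_mul hb H
  set c := f b / g b
  have hc0 : c ≠ 0 := by
    obtain ⟨a, ha⟩ := ne_iff.mp hf
    exact left_ne_zero_of_mul ((hc a).1 ▸ ha)
  have hgσ : ∀ x, g (σ x) = g x := fun x =>
    mul_left_cancel₀ hc0 (((hc (σ x)).1.symm.trans (hc x).2))
  have hmul : ∀ x y, g (x * y) = g x * g y := fun x y =>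
    mul_left_cancel₀ hc0 (by rw [← (hc _).1, hfg, (hc x).1, mul_assoc])
  refine ⟨g, c, 0, hmul, hg, by simp [hc0], fun x => by simp [(hc x).1], fun x => ?_⟩
  rw [hgσ]
  ring

variable [CharZero K]

theorem isSineAddition_mulDefect (hE : VariantWilson σ f g)
    (hσmul : ∀ x y, σ (x * y) = σ x * σ y) (x : S) : IsSineAddition (mulDefect f g x) g := by
  intro y z
  have e₁ := hE (x * y) z
  have e₂ := hE x (y * z)
  have e₃ := hE x z
  have e₄ := hE (σ z * x) y
  rw [hσmul] at e₂
  simp only [mulDefect, mul_assoc] at e₁ e₂ e₃ e₄ ⊢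
  linear_combination (e₁ - e₄ + e₂ - 2 * g y * e₃) / 2

theorem mulDefect_mul_left (hE : VariantWilson σ f g) (hσmul : ∀ x y, σ (x * y) = σ x * σ y)
    (x y z : S) :
    mulDefect f g (x * y) z = mulDefect f g x z * g y + f x * mulDefect g g y z := by
  have h := hE.isSineAddition_mulDefect hσmul x y z
  unfold mulDefect at h ⊢
  rw [mul_assoc]
  linear_combination h

theorem mulDefect_comp_mul (hE : VariantWilson σ f g) (hσmul : ∀ x y, σ (x * y) = σ x * σ y)
    (x y z : S) :
    mulDefect f g (σ y * x) z = mulDefect f g x z * g y - f x * mulDefect g g z y := by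
  have e₁ := hE x y
  have e₂ := hE (x * z) y
  have h := hE.isSineAddition_mulDefect hσmul x z y
  unfold mulDefect at h ⊢
  rw [mul_assoc] at e₂ ⊢
  linear_combination e₂ - h - g z * e₁

theorem isSineSolution_of_map_mul (hE : VariantWilson σ f g)
    (hσmul : ∀ x y, σ (x * y) = σ x * σ y) (hσ : Involutive σ) (hg : g ≠ 0)
    (hmul : ∀ x y, g (x * y) = g x * g y) {x₀ y₀ : S} (h₀ : mulDefect f g x₀ y₀ ≠ 0) :
    IsSineSolution σ f g := by
  obtain ⟨b, hb⟩ := ne_iff.mp hg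
  have hΔ : ∀ y z, mulDefect g g y z = 0 := fun y z => sub_eq_zero.2 (hmul y z)
  have hR : ∀ z u x, mulDefect f g (σ u) z * g x = mulDefect f g x z * g u := by
    intro z u x
    -- both sides are `mulDefect f g (σ u * x) z`
    have h₁ := hE.mulDefect_mul_left hσmul (σ u) x z
    have h₂ := hE.mulDefect_comp_mul hσmul x u z
    rw [hΔ] at h₁ h₂
    linear_combination h₂ - h₁
  have hgσ : ∀ y, g y = g (σ y) :=
    eq_comp_of_mul_comp_eq_mul hσ (a := fun x => mulDefect f g x y₀) (ne_iff.2 ⟨x₀, h₀⟩)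
      (fun x y => hR y₀ y x)
  set ψ : S → K := fun z => mulDefect f g b z / g b
  have hφψ : ∀ x z, mulDefect f g x z = ψ z * g x := fun x z =>
    (eq_div_mul_of_mul_eq_mul hb (u := fun x => mulDefect f g (σ x) z) (fun x y => hR z y x) x).1
  have hψ : IsSineAddition ψ g := fun y z => by
    simp only [ψ, hE.isSineAddition_mulDefect hσmul b y z]
    ring
  have hψ0 : ψ ≠ 0 := fun h => h₀ (by rw [hφψ, h, Pi.zero_apply, zero_mul])
  have H : ∀ x y, (f (σ y) + ψ y) * g x = (f x - ψ x) * g y := by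
    intro x y
    have h₁ := hφψ x y
    have h₂ := hφψ (σ y) x
    unfold mulDefect at h₁ h₂
    rw [← hgσ] at h₂
    linear_combination hE x y - h₁ - h₂
  have hγ := eq_div_mul_of_mul_eq_mul hb H
  refine ⟨g, ψ, (f b - ψ b) / g b, hmul, hg, hψ0, hψ, fun x => (hgσ x).symm, fun x => ?_,
    fun x => by linear_combination (hγ x).1, rfl⟩
  have h₁ := (hγ x).2
  have h₂ := (hγ (σ x)).1
  rw [← hgσ] at h₂
  linear_combination h₁ - h₂

theorem isExponentialSolution_of_eq_add (hE : VariantWilson σ f g) (hσ : Involutive σ)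
    (hf : f ≠ 0) (hg : g ≠ 0) {χ₁ χ₂ A B : S → K} {t : S}
    (hχ₁ : ∀ x y, χ₁ (x * y) = χ₁ x * χ₁ y) (hχ₂ : ∀ x y, χ₂ (x * y) = χ₂ x * χ₂ y)
    (ht : χ₁ t ≠ χ₂ t) (hA : ∀ x y, A (x * y) = A x * χ₁ y) (hB : ∀ x y, B (x * y) = B x * χ₂ y)
    (hfAB : ∀ x, f x = A x + B x) (hgχ : ∀ x, g x = (χ₁ x + χ₂ x) / 2) :
    IsExponentialSolution σ f g := by
  have hsplit : ∀ x y, A (σ y) * χ₁ x + B (σ y) * χ₂ x = A x * χ₂ y + B x * χ₁ y := by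
    intro x y
    have h := hE x y
    simp only [hfAB, hA, hB, hgχ] at h
    linear_combination h
  have hA' : ∀ x y, A (σ y) * χ₁ x = A x * χ₂ y := fun x y => sub_eq_zero.1 <|
    eigen_eq_zero_of_add_eq_zero ht (u := fun x => A (σ y) * χ₁ x - A x * χ₂ y)
      (v := fun x => B (σ y) * χ₂ x - B x * χ₁ y)
      (fun x z => by simp only [hχ₁, hA]; ring) (fun x z => by simp only [hχ₂, hB]; ring)
      (fun x => by linear_combination hsplit x y) x
  have hB' : ∀ x y, B (σ y) * χ₂ x = B x * χ₁ y := fun x y => by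
    linear_combination hsplit x y - hA' x y
  have hχσ : ∀ x, χ₂ x = χ₁ (σ x) := by
    by_cases hA0 : A = 0
    · have hB0 : B ≠ 0 := fun hB0 => hf (funext fun x => by simp [hfAB, hA0, hB0])
      intro x
      simpa only [hσ x] using (eq_comp_of_mul_comp_eq_mul hσ hB0 hB' (σ x)).symm
    · exact eq_comp_of_mul_comp_eq_mul hσ hA0 hA'
  obtain ⟨x₁, hx₁⟩ : ∃ x₁, χ₁ x₁ ≠ 0 := by
    by_contra! h
    exact hg (funext fun x => by simp [hgχ, hχσ, h])
  have hAχ := eq_div_mul_of_mul_eq_mul hx₁ (u := A) (v := A) fun x y => by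
    simpa only [hσ y, hχσ (σ y)] using hA' x (σ y)
  have hBχ := eq_div_mul_of_mul_eq_mul (p := χ₂) (b := σ x₁) (by rwa [hχσ, hσ]) (u := B) (v := B)
    fun x y => by simpa only [hσ y, ← hχσ y] using hB' x (σ y)
  refine ⟨χ₁, A x₁ / χ₁ x₁, B (σ x₁) / χ₂ (σ x₁), hχ₁, ne_iff.2 ⟨x₁, hx₁⟩, fun h => hf ?_,
    fun x => by rw [hfAB, (hAχ x).1, (hBχ x).1, ← hχσ], fun x => by rw [hgχ, hχσ]⟩
  obtain ⟨hα, hβ⟩ := Prod.ext_iff.1 h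
  funext x
  simp only at hα hβ
  rw [hfAB, (hAχ x).1, (hBχ x).1, hα, hβ, Pi.zero_apply]
  ring

theorem exists_map_mul_eq_add (hE : VariantWilson σ f g) (hσmul : ∀ x y, σ (x * y) = σ x * σ y)
    {φ : S → K} {μ : K} {t : S} (hφ : IsSineAddition φ g) (ht : φ t ≠ 0) (hμ : μ ≠ 0)
    (hΔ : ∀ y z, mulDefect g g y z = μ * φ y * φ z) :
    ∃ c : S → K, (∀ x y, f (x * y) = f x * g y + c x * φ y) ∧
      ∀ x y, c (x * y) = c x * g y + μ * f x * φ y := by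
  have htt : mulDefect g g t t ≠ 0 := by
    rw [hΔ]
    exact mul_ne_zero (mul_ne_zero hμ ht) ht
  have hF : ∀ x y, mulDefect f g x y = mulDefect f g x t / φ t * φ y := fun x y => by
    have h := hφ.mul_eq_mul_of_mulDefect_ne_zero (hE.isSineAddition_mulDefect hσmul x) htt y
    field_simp
    linear_combination h
  refine ⟨fun x => mulDefect f g x t / φ t, fun x y => eq_add_of_sub_eq' (hF x y),
    fun x y => mul_right_cancel₀ ht ?_⟩
  have h := hE.mulDefect_mul_left hσmul x y t
  rw [hΔ] at h
  field_simp
  linear_combination h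

theorem isExponentialSolution_of_not_map_mul [IsAlgClosed K] (hE : VariantWilson σ f g)
    (hσmul : ∀ x y, σ (x * y) = σ x * σ y) (hσ : Involutive σ) (hf : f ≠ 0) (hg : g ≠ 0)
    (hmul : ¬ ∀ x y, g (x * y) = g x * g y) {x₀ y₀ : S} (h₀ : mulDefect f g x₀ y₀ ≠ 0) :
    IsExponentialSolution σ f g := by
  have hφ := hE.isSineAddition_mulDefect hσmul x₀
  generalize mulDefect f g x₀ = φ at hφ h₀
  obtain ⟨μ, hΔ⟩ := hφ.exists_mulDefect_eq h₀
  have hμ : μ ≠ 0 := by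
    rintro rfl
    refine hmul fun x y => sub_eq_zero.1 ?_
    simpa [mulDefect] using hΔ x y
  obtain ⟨ν, hν⟩ := IsAlgClosed.exists_pow_nat_eq μ two_pos
  have hν0 : ν ≠ 0 := by
    rintro rfl
    exact hμ (by simpa using hν.symm)
  obtain ⟨c, hF, hC⟩ := hE.exists_map_mul_eq_add hσmul hφ h₀ hμ hΔ
  -- Right translation by `y` acts on `(f, c)` by the matrix `[[g y, μ φ y], [φ y, g y]]`;
  -- `A` and `B` are the coordinates along its eigenvectors, with eigenvalues `g y ± ν φ y`.
  refine hE.isExponentialSolution_of_eq_add hσ hf hg (t := y₀)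
    (χ₁ := fun x => g x + ν * φ x) (χ₂ := fun x => g x + -ν * φ x)
    (A := fun x => (f x + c x / ν) / 2) (B := fun x => (f x - c x / ν) / 2)
    (hφ.add_mul_map_mul hΔ hν) (hφ.add_mul_map_mul hΔ (by rw [neg_sq, hν])) ?_
    (fun x y => ?_) (fun x y => ?_) (fun x => by ring) (fun x => by ring)
  · intro h
    have h2 : 2 * ν * φ y₀ = 0 := by linear_combination h
    simp [hν0, h₀] at h2
  · field_simp
    linear_combination ν * hF x y + hC x y - f x * φ y * hν
  · field_simp
    linear_combination ν * hF x y - hC x y + f x * φ y * hν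

end VariantWilson

end VariantWilson

end

/-- Variant of Wilson's functional equation `f(xy) + f(σ(y)x) = 2 f(x) g(y)` on a
semigroup `S` with an involutive automorphism `σ`: description of all solution
pairs `(f, g)` with `g ≠ 0`. -/
theorem wilson_variant_solutions {S : Type*} [Semigroup S] (σ : S → S)
    (hσmul : ∀ x y : S, σ (x * y) = σ x * σ y) (hσinv : ∀ x : S, σ (σ x) = x)
    (f g : S → ℂ) (hg : g ≠ 0) :
    (∀ x y : S, f (x * y) + f (σ y * x) = 2 * f x * g y) ↔
      (f = 0) ∨
      (∃ (χ : S → ℂ) (α β : ℂ),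
        (∀ x y : S, χ (x * y) = χ x * χ y) ∧ χ ≠ 0 ∧ (α, β) ≠ (0, 0) ∧
        (∀ x : S, f x = α * χ x + β * χ (σ x)) ∧
        (∀ x : S, g x = (χ x + χ (σ x)) / 2)) ∨
      (∃ (χ φ : S → ℂ) (γ₁ : ℂ),
        (∀ x y : S, χ (x * y) = χ x * χ y) ∧ χ ≠ 0 ∧
        φ ≠ 0 ∧ (∀ x y : S, φ (x * y) = φ x * χ y + φ y * χ x) ∧
        (∀ x : S, χ (σ x) = χ x) ∧ (∀ x : S, φ (σ x) = -φ x) ∧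
        (∀ x : S, f x = γ₁ * χ x + φ x) ∧ g = χ) := by
  refine ⟨fun (hE : VariantWilson σ f g) => ?_, ?_⟩
  · by_cases hf : f = 0
    · exact Or.inl hf
    by_cases hφ : ∀ x y, mulDefect f g x y = 0
    · exact Or.inr (Or.inl (hE.isExponentialSolution_of_mulDefect_eq_zero hf hg hφ))
    push Not at hφ
    obtain ⟨x₀, y₀, h₀⟩ := hφ
    by_cases hmul : ∀ x y, g (x * y) = g x * g y
    · exact Or.inr (Or.inr (hE.isSineSolution_of_map_mul hσmul hσinv hg hmul h₀))
    · exact Or.inr (Or.inl (hE.isExponentialSolution_of_not_map_mul hσmul hσinv hf hg hmul h₀))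
  · rintro (rfl | h | h)
    · intro x y
      simp
    · exact IsExponentialSolution.variantWilson hσmul hσinv h
    · exact IsSineSolution.variantWilson h
end

section
/- Let S be a semigroup, σ : S → S an involutive automorphism, and μ a finite linear combination of Dirac measures at central points, given by a finite index set I, constants c_i ∈ ℂ, and elements z_i ∈ Z(S). Suppose f, g : S → ℂ satisfy ∑_{i∈I} c_i f(x y z_i) + ∑_{i∈I} c_i f(σ(y) x z_i) = 2 f(x) g(y) for all x, y ∈ S, with f ≠ 0 and g ≠ 0. Then for all x, y ∈ S: (∑_{i∈I} c_i f(x z_i)) · (∑_{j∈I} c_j g(y z_j) + ∑_{j∈I} c_j g(y σ(z_j))) = 2 f(x) g(y) · (∑_{j∈I} c_j g(z_j)). -/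
/-- Lemma: if `(f, g)` solves the Kannappan–Wilson equation with a measure that is a
finite linear combination of Dirac measures at central points, and `f ≠ 0`, `g ≠ 0`,
then `(∑ᵢ cᵢ f(x zᵢ)) (∑ⱼ cⱼ g(y zⱼ) + ∑ⱼ cⱼ g(y σ(zⱼ))) = 2 f(x) g(y) ∑ⱼ cⱼ g(zⱼ)`. -/
theorem kannappan_wilson_key_identity {S : Type*} [Semigroup S] (σ : S → S)
    (hσmul : ∀ x y : S, σ (x * y) = σ x * σ y) (hσinv : ∀ x : S, σ (σ x) = x)
    {ι : Type*} [Fintype ι] (c : ι → ℂ) (z : ι → S)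
    (hz : ∀ (i : ι) (x : S), x * z i = z i * x)
    (f g : S → ℂ) (hf : f ≠ 0) (hg : g ≠ 0)
    (heq : ∀ x y : S,
      (∑ i, c i * f (x * y * z i)) + (∑ i, c i * f (σ y * x * z i)) = 2 * f x * g y) :
    ∀ x y : S,
      (∑ i, c i * f (x * z i)) *
        ((∑ j, c j * g (y * z j)) + (∑ j, c j * g (y * σ (z j)))) =
      2 * f x * g y * (∑ j, c j * g (z j)) := by
  -- σ (z i) is also central
  have hzσ : ∀ (i : ι) (x : S), x * σ (z i) = σ (z i) * x := by
    intro i x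
    rw [← hσinv x, ← hσmul, ← hσmul, hz]
  -- a central element can be moved past a factor
  have cen : ∀ t : S, (∀ u : S, u * t = t * u) → ∀ a b : S, a * t * b = a * b * t := by
    intro t ht a b
    rw [mul_assoc, ← ht b, ← mul_assoc]
  -- pulling a scalar into a sum
  have pull : ∀ (a : ℂ) (u : ι → ℂ), a * (∑ j, c j * u j) = ∑ j, c j * (a * u j) := by
    intro a u
    rw [Finset.mul_sum]
    exact Finset.sum_congr rfl fun j _ => by ring
  -- swapping double sums
  have dswap : ∀ A : ι → ι → ℂ,
      (∑ i, c i * (∑ j, c j * A i j)) = ∑ j, c j * (∑ i, c i * A i j) := by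
    intro A
    simp only [Finset.mul_sum]
    rw [Finset.sum_comm]
    exact Finset.sum_congr rfl fun j _ => Finset.sum_congr rfl fun i _ => by ring
  -- the per-index swap identity for any solution h of the same equation
  have swap : ∀ h : S → ℂ,
      (∀ x y : S,
        (∑ i, c i * h (x * y * z i)) + (∑ i, c i * h (σ y * x * z i)) = 2 * h x * g y) →
      ∀ (x y : S) (j : ι),
        2 * h x * g (y * z j) + 2 * h x * g (y * σ (z j)) =
        2 * h (x * z j) * g y + 2 * h (x * σ (z j)) * g y := by
    intro h hh x y j
    rw [← hh x (y * z j), ← hh x (y * σ (z j)), ← hh (x * z j) y, ← hh (x * σ (z j)) y]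
    have e1 : ∀ i : ι, x * (y * z j) * z i = x * z j * y * z i := fun i => by
      rw [← mul_assoc x y (z j), cen (z j) (hz j) x y]
    have e2 : ∀ i : ι, σ (y * z j) * x * z i = σ y * (x * σ (z j)) * z i := fun i => by
      rw [hσmul, ← mul_assoc (σ y) x (σ (z j)), cen (σ (z j)) (hzσ j) (σ y) x]
    have e3 : ∀ i : ι, x * (y * σ (z j)) * z i = x * σ (z j) * y * z i := fun i => by
      rw [← mul_assoc x y (σ (z j)), cen (σ (z j)) (hzσ j) x y]
    have e4 : ∀ i : ι, σ (y * σ (z j)) * x * z i = σ y * (x * z j) * z i := fun i => by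
      rw [hσmul, hσinv, ← mul_assoc (σ y) x (z j), cen (z j) (hz j) (σ y) x]
    simp only [e1, e2, e3, e4]
    ring
  -- summed version of the swap identity
  have aux : ∀ h : S → ℂ,
      (∀ x y : S,
        (∑ i, c i * h (x * y * z i)) + (∑ i, c i * h (σ y * x * z i)) = 2 * h x * g y) →
      ∀ x y : S,
        2 * h x * ((∑ j, c j * g (y * z j)) + (∑ j, c j * g (y * σ (z j)))) =
        2 * g y * ((∑ j, c j * h (x * z j)) + (∑ j, c j * h (x * σ (z j)))) := by
    intro h hh x y
    have base : (∑ j, c j * (2 * h x * g (y * z j) + 2 * h x * g (y * σ (z j)))) =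
        ∑ j, c j * (2 * h (x * z j) * g y + 2 * h (x * σ (z j)) * g y) :=
      Finset.sum_congr rfl fun j _ => by rw [swap h hh x y j]
    simp only [mul_add, Finset.sum_add_distrib] at base
    have p1 : 2 * h x * (∑ j, c j * g (y * z j)) = ∑ j, c j * (2 * h x * g (y * z j)) :=
      pull _ _
    have p2 : 2 * h x * (∑ j, c j * g (y * σ (z j))) =
        ∑ j, c j * (2 * h x * g (y * σ (z j))) := pull _ _
    have p3 : 2 * g y * (∑ j, c j * h (x * z j)) = ∑ j, c j * (2 * g y * h (x * z j)) :=
      pull _ _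
    have p4 : 2 * g y * (∑ j, c j * h (x * σ (z j))) =
        ∑ j, c j * (2 * g y * h (x * σ (z j))) := pull _ _
    have t1 : (∑ j, c j * (2 * h (x * z j) * g y)) = ∑ j, c j * (2 * g y * h (x * z j)) :=
      Finset.sum_congr rfl fun j _ => by ring
    have t2 : (∑ j, c j * (2 * h (x * σ (z j)) * g y)) =
        ∑ j, c j * (2 * g y * h (x * σ (z j))) :=
      Finset.sum_congr rfl fun j _ => by ring
    rw [mul_add, mul_add, p1, p2, p3, p4]
    linear_combination base + t1 + t2
  -- F := μ * f satisfies the same functional equation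
  have hF : ∀ x y : S,
      (∑ i, c i * (∑ j, c j * f (x * y * z i * z j))) +
      (∑ i, c i * (∑ j, c j * f (σ y * x * z i * z j))) =
      2 * (∑ j, c j * f (x * z j)) * g y := by
    intro x y
    have a1 : ∀ i j : ι, x * y * z i * z j = x * z j * y * z i := by
      intro i j
      rw [cen (z j) (hz j) x y, cen (z i) (hz i) (x * y) (z j)]
    have a2 : ∀ i j : ι, σ y * x * z i * z j = σ y * (x * z j) * z i := by
      intro i j
      rw [← mul_assoc (σ y) x (z j), cen (z i) (hz i) (σ y * x) (z j)]
    simp only [a1, a2]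
    have d1 : (∑ i, c i * (∑ j, c j * f (x * z j * y * z i))) =
        ∑ j, c j * (∑ i, c i * f (x * z j * y * z i)) := dswap _
    have d2 : (∑ i, c i * (∑ j, c j * f (σ y * (x * z j) * z i))) =
        ∑ j, c j * (∑ i, c i * f (σ y * (x * z j) * z i)) := dswap _
    have p : 2 * (∑ j, c j * f (x * z j)) * g y = ∑ j, c j * (2 * f (x * z j) * g y) := by
      rw [Finset.mul_sum, Finset.sum_mul]
      exact Finset.sum_congr rfl fun j _ => by ring
    rw [d1, d2, p, ← Finset.sum_add_distrib]
    exact Finset.sum_congr rfl fun j _ => by rw [← mul_add, heq (x * z j) y]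
  -- the double μ-average of f equals 2 f x ∑ c j g (z j)
  have hG0 : ∀ x : S,
      (∑ j, c j * (∑ i, c i * f (x * z j * z i))) +
      (∑ j, c j * (∑ i, c i * f (x * σ (z j) * z i))) =
      2 * f x * (∑ j, c j * g (z j)) := by
    intro x
    have b : ∀ i j : ι, x * σ (z j) * z i = σ (z j) * x * z i := by
      intro i j
      rw [hzσ j x]
    simp only [b]
    have p : 2 * f x * (∑ j, c j * g (z j)) = ∑ j, c j * (2 * f x * g (z j)) := pull _ _
    rw [p, ← Finset.sum_add_distrib]
    exact Finset.sum_congr rfl fun j _ => by rw [← mul_add, heq x (z j)]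
  intro x y
  have h1 : 2 * (∑ i, c i * f (x * z i)) *
        ((∑ j, c j * g (y * z j)) + (∑ j, c j * g (y * σ (z j)))) =
      2 * g y * ((∑ j, c j * (∑ i, c i * f (x * z j * z i))) +
        (∑ j, c j * (∑ i, c i * f (x * σ (z j) * z i)))) :=
    aux (fun w => ∑ i, c i * f (w * z i)) hF x y
  rw [hG0 x] at h1
  linear_combination h1 / 2
end

section
/- Let S be a semigroup, σ : S → S an involutive automorphism, and μ a finite linear combination of Dirac measures at central points, given by a finite index set I, constants c_i ∈ ℂ, and elements z_i ∈ Z(S). Suppose f, g : S → ℂ satisfy ∑_{i∈I} c_i f(x y z_i) + ∑_{i∈I} c_i f(σ(y) x z_i) = 2 f(x) g(y) for all x, y ∈ S, with f ≠ 0 and g ≠ 0, and suppose ∑_{i∈I} c_i g(z_i) ≠ 0. Define F(x) := (∑_{i∈I} c_i f(x z_i)) / (∑_{j∈I} c_j g(z_j)) and G(x) := (∑_{i∈I} c_i g(x z_i) + ∑_{i∈I} c_i g(x σ(z_i))) / (2 ∑_{j∈I} c_j g(z_j)). Then G ≠ 0 and F(xy) + F(σ(y)x) = 2 F(x) G(y)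 for all x, y ∈ S. -/
/-!
Write `A x = ∑ᵢ cᵢ f(x zᵢ)` and `B y = ∑ᵢ cᵢ (g(y zᵢ) + g(y σ(zᵢ)))`, and `M = ∑ⱼ cⱼ g(zⱼ)`.
Since `σ` maps central elements to central elements, replacing `x` by `x z` and `x σ(z)`, or `y`
by `y z` and `y σ(z)`, in the equation produces the same four μ-integrals, whence
`(f(x z) + f(x σ z)) g(y) = f(x) (g(y z) + g(y σ z))` for central `z`. Integrating this against
`μ` in `x` once more and using the equation with `y = zₖ` gives `A(x) B(y) = 2 M f(x) g(y)`.
This identity turns the equation for `(f, g)` into the one for `(F, G)`, and evaluated where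
`f` and `g` do not vanish it shows `B ≠ 0`.
-/

open Finset

/-- `∫ h(x t) dμ(t)` for `μ = ∑ᵢ cᵢ δ_{zᵢ}`. -/
def diracConv {S ι : Type*} [Mul S] [Fintype ι] (c : ι → ℂ) (z : ι → S) (h : S → ℂ) (x : S) :
    ℂ :=
  ∑ i, c i * h (x * z i)

section

variable {S ι κ : Type*} [Semigroup S] [Fintype ι] [Fintype κ]

theorem commute_apply_of_involutive_hom {σ : S → S} (hσmul : ∀ x y, σ (x * y) = σ x * σ y)
    (hσinv : ∀ x, σ (σ x) = x) {s : S} (hs : ∀ x, Commute x s) (x : S) : Commute x (σ s) := by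
  have h := congrArg σ (hs (σ x)).eq
  rwa [hσmul, hσmul, hσinv] at h

theorem diracConv_add (c : ι → ℂ) (z : ι → S) (h₁ h₂ : S → ℂ) (x : S) :
    diracConv c z (fun u => h₁ u + h₂ u) x = diracConv c z h₁ x + diracConv c z h₂ x := by
  simp only [diracConv, mul_add, sum_add_distrib]

theorem diracConv_mul_const (c : ι → ℂ) (z : ι → S) (h : S → ℂ) (a : ℂ) (x : S) :
    diracConv c z (fun u => h u * a) x = diracConv c z h x * a := by
  simp only [diracConv, sum_mul, mul_assoc]

theorem diracConv_comm (c : ι → ℂ) (z : ι → S) (d : κ → ℂ) (w : κ → S)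
    (hzw : ∀ i k, Commute (z i) (w k)) (h : S → ℂ) (x : S) :
    diracConv c z (diracConv d w h) x = diracConv d w (diracConv c z h) x := by
  simp only [diracConv, mul_sum, (hzw _ _).right_comm x]
  rw [sum_comm]
  exact sum_congr rfl fun _ _ => sum_congr rfl fun _ _ => mul_left_comm _ _ _

variable {σ : S → S} (hσmul : ∀ x y, σ (x * y) = σ x * σ y) (hσinv : ∀ x, σ (σ x) = x)
  {c : ι → ℂ} {z : ι → S} {f g : S → ℂ}
  (heq : ∀ x y, diracConv c z f (x * y) + diracConv c z f (σ y * x) = 2 * f x * g y)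
include hσmul hσinv heq

theorem add_mul_eq_mul_add_of_central {s : S} (hs : ∀ x, Commute x s) (x y : S) :
    (f (x * s) + f (x * σ s)) * g y = f x * (g (y * s) + g (y * σ s)) := by
  have hσs := commute_apply_of_involutive_hom hσmul hσinv hs
  have h₁ := heq (x * s) y
  have h₂ := heq (x * σ s) y
  have h₃ := heq x (y * s)
  have h₄ := heq x (y * σ s)
  rw [(hs y).symm.right_comm, ← mul_assoc] at h₁
  rw [(hσs y).symm.right_comm, ← mul_assoc] at h₂
  rw [← mul_assoc, hσmul, (hσs x).symm.right_comm] at h₃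
  rw [← mul_assoc, hσmul, hσinv, (hs x).symm.right_comm] at h₄
  linear_combination (h₃ + h₄ - h₁ - h₂) / 2

theorem diracConv_add_mul_eq {s : S} (hs : ∀ x, Commute x s) (x : S) :
    diracConv c z f (x * s) + diracConv c z f (x * σ s) = 2 * f x * g s := by
  rw [← heq x s, (commute_apply_of_involutive_hom hσmul hσinv hs x).eq]

variable (hz : ∀ i x, Commute x (z i))
include hz

theorem diracConv_add_diracConv_comp_mul (x y : S) :
    (diracConv c z f x + diracConv c (σ ∘ z) f x) * g y =
      f x * (diracConv c z g y + diracConv c (σ ∘ z) g y) := by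
  simp only [diracConv, Function.comp_apply, add_mul, mul_add, sum_mul, mul_sum,
    ← sum_add_distrib]
  refine sum_congr rfl fun k _ => ?_
  linear_combination c k * add_mul_eq_mul_add_of_central hσmul hσinv heq (hz k) x y

theorem diracConv_diracConv_add_diracConv_comp (x : S) :
    diracConv c z (fun u => diracConv c z f u + diracConv c (σ ∘ z) f u) x =
      2 * (∑ j, c j * g (z j)) * f x := by
  have hcomm : ∀ i k, Commute (z i) ((σ ∘ z) k) := fun i k =>
    commute_apply_of_involutive_hom hσmul hσinv (hz k) (z i)
  calc diracConv c z (fun u => diracConv c z f u + diracConv c (σ ∘ z) f u) x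
      = diracConv c z (diracConv c z f) x + diracConv c (σ ∘ z) (diracConv c z f) x := by
        rw [diracConv_add, diracConv_comm c z c (σ ∘ z) hcomm]
    _ = ∑ i, c i * (diracConv c z f (x * z i) + diracConv c z f (x * σ (z i))) := by
        simp only [mul_add, sum_add_distrib]; rfl
    _ = 2 * (∑ j, c j * g (z j)) * f x := by
        simp only [diracConv_add_mul_eq hσmul hσinv heq (hz _), mul_sum, sum_mul]
        exact sum_congr rfl fun _ _ => by ring

theorem diracConv_mul_diracConv_add_diracConv_comp (x y : S) :
    diracConv c z f x * (diracConv c z g y + diracConv c (σ ∘ z) g y) =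
      2 * (∑ j, c j * g (z j)) * f x * g y := by
  rw [← diracConv_diracConv_add_diracConv_comp hσmul hσinv heq hz, ← diracConv_mul_const,
    ← diracConv_mul_const]
  simp only [diracConv_add_diracConv_comp_mul hσmul hσinv heq hz]

end

/-- Lemma: if `(f, g)` solves the Kannappan–Wilson equation with `f ≠ 0`, `g ≠ 0`
and `∑ᵢ cᵢ g(zᵢ) ≠ 0`, then with
`F(x) = (∑ᵢ cᵢ f(x zᵢ)) / ∑ⱼ cⱼ g(zⱼ)` and
`G(x) = (∑ᵢ cᵢ g(x zᵢ) + ∑ᵢ cᵢ g(x σ(zᵢ))) / (2 ∑ⱼ cⱼ g(zⱼ))`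
one has `G ≠ 0` and `F(xy) + F(σ(y)x) = 2 F(x) G(y)`. -/
theorem kannappan_wilson_reduction {S : Type*} [Semigroup S] (σ : S → S)
    (hσmul : ∀ x y : S, σ (x * y) = σ x * σ y) (hσinv : ∀ x : S, σ (σ x) = x)
    {ι : Type*} [Fintype ι] (c : ι → ℂ) (z : ι → S)
    (hz : ∀ (i : ι) (x : S), x * z i = z i * x)
    (f g : S → ℂ) (hf : f ≠ 0) (hg : g ≠ 0)
    (heq : ∀ x y : S,
      (∑ i, c i * f (x * y * z i)) + (∑ i, c i * f (σ y * x * z i)) = 2 * f x * g y)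
    (hgz : (∑ j, c j * g (z j)) ≠ 0)
    (F G : S → ℂ)
    (hF : ∀ x : S, F x = (∑ i, c i * f (x * z i)) / (∑ j, c j * g (z j)))
    (hG : ∀ x : S, G x =
      ((∑ i, c i * g (x * z i)) + (∑ i, c i * g (x * σ (z i)))) /
        (2 * ∑ j, c j * g (z j))) :
    G ≠ 0 ∧ ∀ x y : S, F (x * y) + F (σ y * x) = 2 * F x * G y := by
  have hprod : ∀ x y, (∑ i, c i * f (x * z i)) *
      ((∑ i, c i * g (y * z i)) + (∑ i, c i * g (y * σ (z i)))) =
        2 * (∑ j, c j * g (z j)) * f x * g y :=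
    diracConv_mul_diracConv_add_diracConv_comp hσmul hσinv heq hz
  refine ⟨fun hG0 => ?_, fun x y => ?_⟩
  · obtain ⟨x₀, hx₀⟩ : ∃ x, f x ≠ 0 := Function.ne_iff.mp hf
    obtain ⟨y₀, hy₀⟩ : ∃ y, g y ≠ 0 := Function.ne_iff.mp hg
    have hB : (∑ i, c i * g (y₀ * z i)) + (∑ i, c i * g (y₀ * σ (z i))) = 0 := by
      simpa [hG, hgz] using congrFun hG0 y₀
    have h := hprod x₀ y₀
    rw [hB, mul_zero] at h
    simp [hgz, hx₀, hy₀] at h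
  · rw [hF, hF, hF, hG, ← add_div, heq]
    field_simp
    linear_combination -hprod x y
end

section
/- Let S be a semigroup, σ : S → S an involutive automorphism, and μ a finite linear combination of Dirac measures at central points, given by a finite index set I, constants c_i ∈ ℂ, and elements z_i ∈ Z(S). Suppose f, g : S → ℂ satisfy ∑_{i∈I} c_i f(x y z_i) + ∑_{i∈I} c_i f(σ(y) x z_i) = 2 f(x) g(y) for all x, y ∈ S, with f ≠ 0 and g ≠ 0, and suppose ∑_{i∈I} c_i g(z_i) = 0. Then there exists a constant λ₁ ∈ ℂ \ {0} such that ∑_{i∈I} c_i f(x z_i) = λ₁ f(x) for all x ∈ S. -/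
/-!
Write `T h (x) = ∑ᵢ cᵢ h(x zᵢ)`. Because the `zᵢ` are central, `T` commutes with translations,
so `(T f, g)` solves the equation whenever `(f, g)` does. Substituting `y = zᵢ` and `y ↦ y zᵢ`
and using `∑ᵢ cᵢ g(zᵢ) = 0` splits the equation into the sine-type law
`T² f (x y) = T f (x) g(y) + f(x) T g (y)`. Evaluating `T³ f (x y)` in two ways gives
`T² f (x) g(y) = f(x) T² g (y)`, so `T² f = κ f`; summing the law at `y = zⱼ` gives `T³ f = E f`.
Then `κ T f = E f`, and `κ, E ≠ 0` because no iterate `Tⁿ f` of a nonzero solution vanishes.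
-/

namespace KannappanWilson

open Finset

variable {S : Type*} [Semigroup S] {ι : Type*} [Fintype ι]

/-- The paper's `x ↦ ∫ h(x t) dμ(t)` for `μ = ∑ᵢ cᵢ δ_{zᵢ}`. -/
def conv (c : ι → ℂ) (z : ι → S) (h : S → ℂ) (x : S) : ℂ :=
  ∑ i, c i * h (x * z i)

def IsSolution (σ : S → S) (c : ι → ℂ) (z : ι → S) (f g : S → ℂ) : Prop :=
  ∀ x y, conv c z f (x * y) + conv c z f (σ y * x) = 2 * f x * g y

variable {σ : S → S} {c : ι → ℂ} {z : ι → S} {f g : S → ℂ}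

theorem conv_smul (a : ℂ) (h : S → ℂ) : conv c z (a • h) = a • conv c z h := by
  ext x
  simp only [conv, Pi.smul_apply, smul_eq_mul, mul_sum]
  exact sum_congr rfl fun i _ => by ring

theorem IsSolution.isSolution_conv (hz : ∀ i x, x * z i = z i * x) (h : IsSolution σ c z f g) :
    IsSolution σ c z (conv c z f) g := by
  intro x y
  have hi : ∀ i, conv c z f (x * y * z i) + conv c z f (σ y * x * z i)
      = 2 * f (x * z i) * g y := fun i => by
    have hxzy : x * z i * y = x * y * z i := by rw [mul_assoc, ← hz, ← mul_assoc]
    rw [← h, hxzy, mul_assoc (σ y)]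
  calc conv c z (conv c z f) (x * y) + conv c z (conv c z f) (σ y * x)
      = ∑ i, c i * (conv c z f (x * y * z i) + conv c z f (σ y * x * z i)) := by
        simp only [conv, mul_add, sum_add_distrib]
    _ = ∑ i, c i * (2 * f (x * z i) * g y) := by simp only [hi]
    _ = 2 * conv c z f x * g y := by
        simp only [conv, mul_sum, sum_mul]
        exact sum_congr rfl fun i _ => by ring

theorem IsSolution.conv_ne_zero (h : IsSolution σ c z f g) (hf : f ≠ 0) (hg : g ≠ 0) :
    conv c z f ≠ 0 := by
  intro h0
  obtain ⟨y, hy⟩ := Function.ne_iff.mp hg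
  refine hf (funext fun x => ?_)
  have hxy := h x y
  simp only [h0, Pi.zero_apply, add_zero] at hxy
  have hfg : f x * g y = 0 := by linear_combination -hxy / 2
  exact (mul_eq_zero.mp hfg).resolve_right hy

theorem IsSolution.sum_conv_sigma_mul (h : IsSolution σ c z f g) (hgz : ∑ i, c i * g (z i) = 0)
    (x : S) : ∑ i, c i * conv c z f (σ (z i) * x) = -conv c z (conv c z f) x := by
  have hsum : ∑ i, c i * (conv c z f (x * z i) + conv c z f (σ (z i) * x))
      = 2 * f x * ∑ i, c i * g (z i) := by
    rw [mul_sum]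
    exact sum_congr rfl fun i _ => by rw [h x (z i)]; ring
  rw [hgz, mul_zero] at hsum
  simp only [mul_add, sum_add_distrib] at hsum
  rw [eq_neg_iff_add_eq_zero, add_comm]
  exact hsum

variable (hσ : ∀ x y, σ (x * y) = σ x * σ y) (hz : ∀ i x, x * z i = z i * x)
include hσ hz

theorem IsSolution.conv_conv_mul_sub (h : IsSolution σ c z f g) (hgz : ∑ i, c i * g (z i) = 0)
    (x y : S) :
    conv c z (conv c z f) (x * y) - conv c z (conv c z f) (σ y * x) = 2 * f x * conv c z g y := by
  -- `y zᵢ = zᵢ y` turns `σ (y zᵢ) x` into `σ zᵢ (σ y x)`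
  have hi : ∀ i, conv c z f (x * y * z i) + conv c z f (σ (z i) * (σ y * x))
      = 2 * f x * g (y * z i) := fun i => by
    rw [← h, mul_assoc x, hz, hσ, mul_assoc]
  calc conv c z (conv c z f) (x * y) - conv c z (conv c z f) (σ y * x)
      = conv c z (conv c z f) (x * y) + ∑ i, c i * conv c z f (σ (z i) * (σ y * x)) := by
        rw [h.sum_conv_sigma_mul hgz, sub_eq_add_neg]
    _ = ∑ i, c i * (conv c z f (x * y * z i) + conv c z f (σ (z i) * (σ y * x))) := by
        simp only [mul_add, sum_add_distrib]
        rfl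
    _ = ∑ i, c i * (2 * f x * g (y * z i)) := by simp only [hi]
    _ = 2 * f x * conv c z g y := by
        rw [conv, mul_sum]
        exact sum_congr rfl fun i _ => by ring

theorem IsSolution.conv_conv_mul (h : IsSolution σ c z f g) (hgz : ∑ i, c i * g (z i) = 0)
    (x y : S) : conv c z (conv c z f) (x * y) = conv c z f x * g y + f x * conv c z g y := by
  linear_combination (h.isSolution_conv hz x y + h.conv_conv_mul_sub hσ hz hgz x y) / 2

theorem IsSolution.conv_conv_sigma_mul (h : IsSolution σ c z f g)
    (hgz : ∑ i, c i * g (z i) = 0) (x y : S) :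
    conv c z (conv c z f) (σ y * x) = conv c z f x * g y - f x * conv c z g y := by
  linear_combination (h.isSolution_conv hz x y - h.conv_conv_mul_sub hσ hz hgz x y) / 2

-- `T³ f (x y)` expanded by the sine-type law for `T f`, and for `f` at `(x, y zᵢ)`
theorem IsSolution.conv_conv_apply_mul_eq (h : IsSolution σ c z f g) (hgz : ∑ i, c i * g (z i) = 0)
    (x y : S) : conv c z (conv c z f) x * g y = f x * conv c z (conv c z g) y := by
  have hT := (h.isSolution_conv hz).conv_conv_mul hσ hz hgz x y
  have hyz : conv c z (conv c z (conv c z f)) (x * y)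
      = conv c z f x * conv c z g y + f x * conv c z (conv c z g) y :=
    calc conv c z (conv c z (conv c z f)) (x * y)
        = ∑ i, c i * conv c z (conv c z f) (x * (y * z i)) := by simp only [conv, mul_assoc]
      _ = ∑ i, c i * (conv c z f x * g (y * z i) + f x * conv c z g (y * z i)) := by
          simp only [h.conv_conv_mul hσ hz hgz]
      _ = conv c z f x * conv c z g y + f x * conv c z (conv c z g) y := by
          simp only [mul_add, sum_add_distrib, mul_left_comm (c _) (conv c z f x),
            mul_left_comm (c _) (f x), ← mul_sum]
          rfl
  linear_combination hyz - hT

theorem IsSolution.conv_conv_eq_smul (h : IsSolution σ c z f g)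
    (hgz : ∑ i, c i * g (z i) = 0) (hg : g ≠ 0) : ∃ κ : ℂ, conv c z (conv c z f) = κ • f := by
  obtain ⟨y, hy⟩ := Function.ne_iff.mp hg
  refine ⟨conv c z (conv c z g) y / g y, funext fun x => ?_⟩
  rw [Pi.smul_apply, smul_eq_mul, div_mul_eq_mul_div, eq_div_iff hy,
    h.conv_conv_apply_mul_eq hσ hz hgz, mul_comm]

theorem IsSolution.conv_conv_conv_eq (h : IsSolution σ c z f g)
    (hgz : ∑ i, c i * g (z i) = 0) (x : S) :
    conv c z (conv c z (conv c z f)) x = (∑ j, c j * conv c z g (z j)) * f x :=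
  calc conv c z (conv c z (conv c z f)) x
      = -∑ j, c j * conv c z (conv c z f) (σ (z j) * x) := by
        rw [(h.isSolution_conv hz).sum_conv_sigma_mul hgz, neg_neg]
    _ = -∑ j, c j * (conv c z f x * g (z j) - f x * conv c z g (z j)) := by
        simp only [h.conv_conv_sigma_mul hσ hz hgz]
    _ = (∑ j, c j * conv c z g (z j)) * f x - conv c z f x * ∑ j, c j * g (z j) := by
        simp only [mul_sum, sum_mul, ← sum_sub_distrib, ← sum_neg_distrib]
        exact sum_congr rfl fun j _ => by ring
    _ = (∑ j, c j * conv c z g (z j)) * f x := by rw [hgz, mul_zero, sub_zero]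

end KannappanWilson

open KannappanWilson in
theorem kannappan_wilson_eigen_general {S : Type*} [Semigroup S] (σ : S → S)
    (hσmul : ∀ x y : S, σ (x * y) = σ x * σ y)
    {ι : Type*} [Fintype ι] (c : ι → ℂ) (z : ι → S)
    (hz : ∀ (i : ι) (x : S), x * z i = z i * x)
    (f g : S → ℂ) (hf : f ≠ 0) (hg : g ≠ 0)
    (heq : ∀ x y : S,
      (∑ i, c i * f (x * y * z i)) + (∑ i, c i * f (σ y * x * z i)) = 2 * f x * g y)
    (hgz : (∑ i, c i * g (z i)) = 0) :
    ∃ lam₁ : ℂ, lam₁ ≠ 0 ∧ ∀ x : S, (∑ i, c i * f (x * z i)) = lam₁ * f x := by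
  have h₀ : IsSolution σ c z f g := heq
  have h₁ := h₀.isSolution_conv hz
  obtain ⟨κ, hκ⟩ := h₀.conv_conv_eq_smul hσmul hz hgz hg
  set E := ∑ j, c j * conv c z g (z j)
  have hE : conv c z (conv c z (conv c z f)) = E • f :=
    funext (h₀.conv_conv_conv_eq hσmul hz hgz)
  have hf₂ := h₁.conv_ne_zero (h₀.conv_ne_zero hf hg) hg
  have hf₃ := (h₁.isSolution_conv hz).conv_ne_zero hf₂ hg
  have hκ₀ : κ ≠ 0 := by rintro rfl; exact hf₂ (by rw [hκ, zero_smul])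
  have hE₀ : E ≠ 0 := fun h => hf₃ (by rw [hE, h, zero_smul])
  have hκE : κ • conv c z f = E • f := by rw [← conv_smul, ← hκ, hE]
  refine ⟨E / κ, div_ne_zero hE₀ hκ₀, fun x => ?_⟩
  have hx := congrFun hκE x
  simp only [Pi.smul_apply, smul_eq_mul] at hx
  change conv c z f x = _
  rw [div_mul_eq_mul_div, eq_div_iff hκ₀, ← hx, mul_comm]

/-- Lemma: if `(f, g)` solves the Kannappan–Wilson equation with `f ≠ 0`, `g ≠ 0`
and `∑ᵢ cᵢ g(zᵢ) = 0`, then there is a nonzero constant `λ₁` with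
`∑ᵢ cᵢ f(x zᵢ) = λ₁ f(x)` for all `x`. -/
theorem kannappan_wilson_eigen {S : Type*} [Semigroup S] (σ : S → S)
    (hσmul : ∀ x y : S, σ (x * y) = σ x * σ y) (hσinv : ∀ x : S, σ (σ x) = x)
    {ι : Type*} [Fintype ι] (c : ι → ℂ) (z : ι → S)
    (hz : ∀ (i : ι) (x : S), x * z i = z i * x)
    (f g : S → ℂ) (hf : f ≠ 0) (hg : g ≠ 0)
    (heq : ∀ x y : S,
      (∑ i, c i * f (x * y * z i)) + (∑ i, c i * f (σ y * x * z i)) = 2 * f x * g y)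
    (hgz : (∑ i, c i * g (z i)) = 0) :
    ∃ lam₁ : ℂ, lam₁ ≠ 0 ∧ ∀ x : S, (∑ i, c i * f (x * z i)) = lam₁ * f x :=
  kannappan_wilson_eigen_general σ hσmul c z hz f g hf hg heq hgz
end

section
/- Let S be a semigroup, σ : S → S an involutive automorphism, and z₀ ∈ Z(S) a fixed element. If f : S → ℂ satisfies f(x y z₀) + f(σ(y) x z₀) = 0 for all x, y ∈ S, then f(x y z z₀) = 0 for all x, y, z ∈ S. -/
/-- If `f(x y z₀) + f(σ(y) x z₀) = 0` for all `x, y` (with `z₀` central), then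
`f(x y z z₀) = 0` for all `x, y, z`. -/
theorem kannappan_wilson_g_zero {S : Type*} [Semigroup S] (σ : S → S)
    (hσmul : ∀ x y : S, σ (x * y) = σ x * σ y) (hσinv : ∀ x : S, σ (σ x) = x)
    (z₀ : S) (hz₀ : ∀ x : S, x * z₀ = z₀ * x)
    (f : S → ℂ)
    (heq : ∀ x y : S, f (x * y * z₀) + f (σ y * x * z₀) = 0) :
    ∀ x y z : S, f (x * y * z * z₀) = 0 := by
  intro x y z
  have h1 := heq x (y * z)
  have h2 := heq (x * y) z
  have h3 := heq (σ z * x) y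
  rw [hσmul, ← mul_assoc, mul_assoc (σ y)] at h1
  rw [← mul_assoc] at h2
  -- h3 already matches
  linear_combination (h1 + h2 - h3) / 2
end

section
/- Let S be a semigroup, σ : S → S an involutive automorphism, and z₀ ∈ Z(S) a fixed element. A function f : S → ℂ satisfies the Jensen-type equation f(x y z₀) + f(σ(y) x z₀) = 2 f(x) for all x, y ∈ S if and only if f = γ₁ + A, where γ₁ ∈ ℂ is a constant and A : S → ℂ is an additive function (A(xy) = A(x) + A(y) for all x, y ∈ S) such that A ∘ σ = −A and A(z₀) = 0. -/
/-- Jensen-type equation: `f(x y z₀) + f(σ(y) x z₀) = 2 f(x)` holds for all `x, y`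
iff `f = γ₁ + A` for a constant `γ₁` and an additive `A` with `A ∘ σ = -A` and
`A(z₀) = 0`. -/
theorem jensen_variant_solutions {S : Type*} [Semigroup S] (σ : S → S)
    (hσmul : ∀ x y : S, σ (x * y) = σ x * σ y) (hσinv : ∀ x : S, σ (σ x) = x)
    (z₀ : S) (hz₀ : ∀ x : S, x * z₀ = z₀ * x)
    (f : S → ℂ) :
    (∀ x y : S, f (x * y * z₀) + f (σ y * x * z₀) = 2 * f x) ↔
      ∃ (γ₁ : ℂ) (A : S → ℂ),
        (∀ x y : S, A (x * y) = A x + A y) ∧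
        (∀ x : S, A (σ x) = -A x) ∧ A z₀ = 0 ∧
        (∀ x : S, f x = γ₁ + A x) := by
  constructor
  · intro hE
    -- Step 1: f (x * σ y * z₀) - f (σ x * y * z₀) = 2 f x - 2 f y
    have h4 : ∀ x y : S, f (x * σ y * z₀) - f (σ x * y * z₀) = 2 * f x - 2 * f y := by
      intro x y
      have h1 := hE x (σ y)
      rw [hσinv] at h1
      have h2 := hE y x
      linear_combination h1 - h2
    -- Step 2: f x + f (σ x) is constant
    have hc : ∀ x : S, f x + f (σ x) = f z₀ + f (σ z₀) := by
      intro x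
      have h1 := h4 x z₀
      have h2 := h4 (σ x) (σ z₀)
      rw [hσinv, hσinv] at h2
      linear_combination -(h1 + h2) / 2
    -- Step 3: f (x*y*z₀) - f (σ x * σ y * z₀) depends only on x*y
    have h18 : ∀ x y : S, f (x * y * z₀) - f (σ x * σ y * z₀)
        = 2 * f x + 2 * f y - 2 * (f z₀ + f (σ z₀)) := by
      intro x y
      have h1 := h4 x (σ y)
      rw [hσinv] at h1
      have h2 := hc y
      linear_combination h1 - 2 * h2
    -- Step 4: f x + f y depends only on the product x*y
    have h19 : ∀ x y u v : S, x * y = u * v → f x + f y = f u + f v := by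
      intro x y u v h
      have e1 := h18 x y
      have e2 := h18 u v
      rw [← hσmul] at e1 e2
      rw [h] at e1
      linear_combination (e2 - e1) / 2
    have h20 : ∀ x y z : S, f (x * y) + f z = f x + f (y * z) :=
      fun x y z => h19 (x * y) z x (y * z) (mul_assoc x y z)
    set γ : ℂ := 2 * f z₀ - f (z₀ * z₀) with hγ
    have key : ∀ x y : S, f (x * y) = f (x * z₀) + f y - f z₀ := by
      intro x y
      have h := h20 z₀ x y
      rw [← hz₀ x] at h
      linear_combination -h
    have hxz : ∀ x : S, f (x * z₀) = f (z₀ * z₀) + f x - f z₀ := by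
      intro x
      have h := key z₀ x
      rw [← hz₀ x] at h
      exact h
    have hadd : ∀ x y : S, f (x * y) = f x + f y - γ := by
      intro x y
      have h1 := key x y
      have h2 := hxz x
      rw [hγ]
      linear_combination h1 + h2
    -- Step 5: f y + f (σ y) = 4γ - 2 f z₀
    have hstar : ∀ y : S, f y + f (σ y) = 4 * γ - 2 * f z₀ := by
      intro y
      have h := hE z₀ y
      have a1 := hadd (z₀ * y) z₀
      have a2 := hadd z₀ y
      have a3 := hadd (σ y * z₀) z₀
      have a4 := hadd (σ y) z₀
      linear_combination h - a1 - a2 - a3 - a4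
    -- Step 6: γ = f z₀
    have hγz : γ = f z₀ := by
      have h1 := hstar (z₀ * z₀)
      rw [hσmul] at h1
      have h2 := hadd z₀ z₀
      have h3 := hadd (σ z₀) (σ z₀)
      have h5 := hstar z₀
      linear_combination (h1 - h2 - h3 - 2 * h5) / 2
    refine ⟨f z₀, fun x => f x - f z₀, ?_, ?_, by ring, fun x => by ring⟩
    · intro x y
      have := hadd x y
      rw [hγz] at this
      linear_combination this
    · intro x
      have h := hstar x
      rw [hγz] at *
      linear_combination h
  · rintro ⟨γ₁, A, hAadd, hAσ, hAz, hf⟩ x y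
    have e1 : A (x * y * z₀) = A x + A y + A z₀ := by rw [hAadd, hAadd]
    have e2 : A (σ y * x * z₀) = A (σ y) + A x + A z₀ := by rw [hAadd, hAadd]
    rw [hf, hf, hf, e1, e2, hAσ, hAz]
    ring
end

section
/- Let S be a semigroup and z₀ ∈ Z(S) a fixed element. The pairs f, g : S → ℂ with g ≠ 0 satisfying f(x y z₀) + f(y x z₀) = 2 f(x) g(y) for all x, y ∈ S are exactly the following: (1) f = 0 and g ≠ 0 arbitrary; (2) f = λ₂ χ and g = χ(z₀) χ, where χ : S → ℂ is a nonzero multiplicative function, λ₂ ∈ ℂ \ {0}, and χ(z₀) ≠ 0. -/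
/-!
Swapping `x` and `y` shows `f x g y = f y g x`, so `f = λ g`, and for `λ ≠ 0` the function `g`
solves Kannappan's equation `g(x y z₀) + g(y x z₀) = 2 g(x) g(y)`. Centrality of `z₀` turns this
into `g(x z₀) = k g(x)` for a constant `k ≠ 0`, so `ψ = g / k` solves the symmetrized
multiplicative equation `ψ(u v) + ψ(v u) = 2 ψ(u) ψ(v)`. Expanding `ψ(x y z)` three ways shows
that the defect `ψ(u v) - ψ(u) ψ(v)` squares to zero, so `ψ` is multiplicative, and `ψ(z₀) = k`.
-/

theorem eq_div_mul_of_mul_comm {α K : Type*} [Field K] {f g : α → K}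
    (hfg : ∀ x y, f x * g y = f y * g x) {b : α} (hb : g b ≠ 0) (x : α) :
    f x = f b / g b * g x := by
  rw [div_mul_eq_mul_div, eq_div_iff hb, hfg]

section Symmetrized

variable {S K : Type*} [Semigroup S] [Field K] [CharZero K] {ψ : S → K}

theorem apply_mul_mul_eq_of_symmetrized
    (hψ : ∀ u v, ψ (u * v) + ψ (v * u) = 2 * ψ u * ψ v) (x y z : S) :
    ψ (x * (y * z)) = ψ x * ψ (y * z) + ψ (x * y) * ψ z - ψ y * ψ (z * x) := by
  have h₁ := hψ x (y * z)
  have h₂ := hψ (x * y) z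
  have h₃ := hψ y (z * x)
  simp only [mul_assoc] at h₁ h₂ h₃ ⊢
  linear_combination (h₁ + h₂ - h₃) / 2

theorem mul_defect_mul_mul_defect_eq_zero_of_symmetrized
    (hψ : ∀ u v, ψ (u * v) + ψ (v * u) = 2 * ψ u * ψ v) (w x y : S) :
    (ψ (y * w) - ψ y * ψ w) * (ψ (w * x) - ψ w * ψ x) = 0 := by
  have e₁ := apply_mul_mul_eq_of_symmetrized hψ x y (w * w)
  have e₂ := apply_mul_mul_eq_of_symmetrized hψ x (y * w) w
  have e₃ := apply_mul_mul_eq_of_symmetrized hψ w w x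
  have e₄ := apply_mul_mul_eq_of_symmetrized hψ x y w
  have e₅ := hψ w w
  have e₆ := hψ x w
  simp only [mul_assoc] at e₁ e₂ e₃ e₄ e₅ e₆ ⊢
  linear_combination -e₁ + e₂ + ψ y * e₃ + ψ w * e₄ +
    ((ψ x * ψ y - ψ (x * y)) / 2) * e₅ - ψ y * ψ w * e₆

theorem map_mul_of_symmetrized
    (hψ : ∀ u v, ψ (u * v) + ψ (v * u) = 2 * ψ u * ψ v) (u v : S) :
    ψ (u * v) = ψ u * ψ v := by
  have hsq : (ψ (u * v) - ψ u * ψ v) ^ 2 = 0 := by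
    linear_combination -mul_defect_mul_mul_defect_eq_zero_of_symmetrized hψ u v v +
      (ψ (u * v) - ψ u * ψ v) * hψ v u
  linear_combination pow_eq_zero_iff two_ne_zero |>.mp hsq

end Symmetrized

section Kannappan

variable {S K : Type*} [Semigroup S] [Field K] [CharZero K] {z₀ : S} {g : S → K}

theorem mul_apply_mul_center_comm_of_kannappan (hz₀ : ∀ x : S, x * z₀ = z₀ * x)
    (hg : ∀ x y, g (x * y * z₀) + g (y * x * z₀) = 2 * g x * g y) (x y : S) :
    g x * g (y * z₀) = g y * g (x * z₀) := by
  have sq_center : ∀ x, g (x * z₀ * z₀) = g x * g z₀ := fun x ↦ by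
    have h := hg x z₀
    rw [← hz₀ x] at h
    linear_combination h / 2
  have swap : ∀ x y, g (x * y) * g z₀ + g (y * x) * g z₀ = 2 * g x * g (y * z₀) :=
    fun x y ↦ by
      have h := hg x (y * z₀)
      rwa [← mul_assoc, mul_assoc y, ← hz₀ x, ← mul_assoc, sq_center, sq_center] at h
  linear_combination (swap y x - swap x y) / 2

theorem exists_map_mul_of_kannappan (hz₀ : ∀ x : S, x * z₀ = z₀ * x)
    (hg : ∀ x y, g (x * y * z₀) + g (y * x * z₀) = 2 * g x * g y) (hg₀ : g ≠ 0) :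
    ∃ χ : S → K, (∀ x y, χ (x * y) = χ x * χ y) ∧ χ z₀ ≠ 0 ∧ ∀ x, g x = χ z₀ * χ x := by
  obtain ⟨b, hb⟩ := Function.ne_iff.mp hg₀
  obtain ⟨k, hk⟩ : ∃ k, ∀ x, g (x * z₀) = k * g x :=
    ⟨_, eq_div_mul_of_mul_comm (f := fun x ↦ g (x * z₀)) (fun x y ↦ by
      linear_combination mul_apply_mul_center_comm_of_kannappan hz₀ hg y x) hb⟩
  have hg' : ∀ u v, k * g (u * v) + k * g (v * u) = 2 * g u * g v := by
    simpa only [hk] using hg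
  have hk₀ : k ≠ 0 := by
    rintro rfl
    exact hb (mul_self_eq_zero.mp (by linear_combination -hg' b b / 2))
  have hχ := map_mul_of_symmetrized (ψ := fun x ↦ g x / k) fun u v ↦ by
    field_simp
    linear_combination hg' u v
  have hχz₀ : g z₀ / k = k := by
    have h := hχ b z₀
    simp only [hk] at h
    field_simp at h
    rw [mul_left_cancel₀ hb (by linear_combination -h : g b * g z₀ = g b * k ^ 2), sq,
      mul_div_cancel_right₀ _ hk₀]
  exact ⟨fun x ↦ g x / k, hχ, by simpa only [hχz₀] using hk₀,
    fun x ↦ by simp only [hχz₀]; field_simp⟩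

end Kannappan

/-- Description of the solutions `(f, g)` with `g ≠ 0` of
`f(x y z₀) + f(y x z₀) = 2 f(x) g(y)` on a semigroup, `z₀` central. -/
theorem symmetrized_kannappan_solutions {S : Type*} [Semigroup S]
    (z₀ : S) (hz₀ : ∀ x : S, x * z₀ = z₀ * x)
    (f g : S → ℂ) (hg : g ≠ 0) :
    (∀ x y : S, f (x * y * z₀) + f (y * x * z₀) = 2 * f x * g y) ↔
      (f = 0) ∨
      (∃ (χ : S → ℂ) (lam₂ : ℂ),
        (∀ x y : S, χ (x * y) = χ x * χ y) ∧ χ ≠ 0 ∧ lam₂ ≠ 0 ∧ χ z₀ ≠ 0 ∧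
        (∀ x : S, f x = lam₂ * χ x) ∧
        (∀ x : S, g x = χ z₀ * χ x)) := by
  constructor
  · intro hfg
    obtain ⟨b, hb⟩ := Function.ne_iff.mp hg
    obtain ⟨lam, hf⟩ : ∃ lam, ∀ x, f x = lam * g x :=
      ⟨_, eq_div_mul_of_mul_comm (fun x y ↦ by linear_combination (hfg y x - hfg x y) / 2) hb⟩
    rcases eq_or_ne lam 0 with rfl | hlam
    · exact Or.inl (funext fun x ↦ by simp [hf])
    have hg' : ∀ x y, g (x * y * z₀) + g (y * x * z₀) = 2 * g x * g y := by
      intro x y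
      have h := hfg x y
      simp only [hf] at h
      exact mul_left_cancel₀ hlam (by linear_combination h)
    obtain ⟨χ, hχ, hχz₀, hgχ⟩ := exists_map_mul_of_kannappan hz₀ hg' hg
    refine Or.inr ⟨χ, lam * χ z₀, hχ, fun h ↦ hχz₀ (congrFun h z₀), mul_ne_zero hlam hχz₀,
      hχz₀, fun x ↦ by rw [hf, hgχ, mul_assoc], hgχ⟩
  · rintro (rfl | ⟨χ, lam₂, hχ, -, -, -, hfχ, hgχ⟩) x y
    · simp
    · simp only [hfχ, hgχ, hχ]
      ring
end

section
/- Let S be a semigroup. If F, G : S → ℂ satisfy F(xy) = F(x) G(y) − F(y) G(x) for all x, y ∈ S, then F and G are linearly dependent, i.e., there exist constants α, β ∈ ℂ with (α, β) ≠ (0, 0) such that α F(x) + β G(x) = 0 for all x ∈ S. -/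
/-- If `F(xy) = F(x)G(y) - F(y)G(x)` on a semigroup, then `F` and `G` are
linearly dependent. -/
theorem sine_subtraction_linear_dependence {S : Type*} [Semigroup S]
    (F G : S → ℂ)
    (heq : ∀ x y : S, F (x * y) = F x * G y - F y * G x) :
    ∃ α β : ℂ, (α, β) ≠ (0, 0) ∧ ∀ x : S, α * F x + β * G x = 0 := by
  by_cases hF : ∀ x : S, F x = 0
  · exact ⟨1, 0, by simp, fun x => by simp [hF x]⟩
  push_neg at hF
  obtain ⟨z0, hz0⟩ := hF
  have key : ∀ x y z : S,
      F x * (G y * G z - G (y * z)) = F z * (G (x * y) + G x * G y) := by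
    intro x y z
    have h1 := heq (x * y) z
    have h2 := heq x (y * z)
    rw [← mul_assoc] at h2
    linear_combination h2 - h1 - G z * heq x y - G x * heq y z
  have main : ∀ x y : S,
      F x * (G y * G z0 - G (y * z0)) + F y * (G (z0 * x) + G z0 * G x)
        = 2 * F z0 * (G x * G y) := by
    intro x y
    linear_combination key x y z0 - key z0 x y
  set A : ℂ := G z0 * G z0 - G (z0 * z0) with hA
  set B : ℂ := G (z0 * z0) + G z0 * G z0 with hB
  have hvx : ∀ x : S, F z0 * (G (z0 * x) + G z0 * G x)
      = 2 * F z0 * G z0 * G x - A * F x := by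
    intro x
    linear_combination main x z0
  have hux : ∀ x : S, F z0 * (G x * G z0 - G (x * z0))
      = 2 * F z0 * G z0 * G x - B * F x := by
    intro x
    linear_combination main z0 x
  have star : ∀ x y : S,
      2 * F z0 * G z0 * (F x * G y + F y * G x) - (A + B) * (F x * F y)
        = 2 * F z0 ^ 2 * (G x * G y) := by
    intro x y
    linear_combination F z0 * main x y - F x * hux y - F y * hvx x
  have hD : ∀ x y : S, F z0 ^ 2 * (G x * F y - G y * F x) ^ 2 = 0 := by
    intro x y
    linear_combination F x * F y * star x y - (F y ^ 2 / 2) * star x x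
      - (F x ^ 2 / 2) * star y y
  have hprop : ∀ x : S, G x * F z0 = G z0 * F x := by
    intro x
    have h0 := hD x z0
    have h1 : (G x * F z0 - G z0 * F x) ^ 2 = 0 := by
      rcases mul_eq_zero.mp h0 with h | h
      · exact absurd (pow_eq_zero_iff two_ne_zero |>.mp h) hz0
      · exact h
    exact sub_eq_zero.mp (pow_eq_zero_iff two_ne_zero |>.mp h1)
  refine ⟨G z0 / F z0, -1, by simp, fun x => ?_⟩
  have h := hprop x
  field_simp
  linear_combination -h
end

section
/- Let S be a semigroup and σ : S → S an involutive automorphism. The pairs f, g : S → ℂ with g ≠ 0 satisfying f(xy) − f(σ(y)x) = 2 f(x) g(y) for all x, y ∈ S are exactly the following: (1) f = 0 and g ≠ 0 arbitrary; (2) f = λ χ and g = (χ − χ*)/2, where χ : S → ℂ is a multiplicative function, λ ∈ ℂ \ {0}, and χ ≠ χ*. -/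
/-- Description of the solutions `(f, g)` with `g ≠ 0` of the Van Vleck type
equation `f(xy) - f(σ(y)x) = 2 f(x) g(y)` on a semigroup. -/
theorem van_vleck_variant_solutions {S : Type*} [Semigroup S] (σ : S → S)
    (hσmul : ∀ x y : S, σ (x * y) = σ x * σ y) (hσinv : ∀ x : S, σ (σ x) = x)
    (f g : S → ℂ) (hg : g ≠ 0) :
    (∀ x y : S, f (x * y) - f (σ y * x) = 2 * f x * g y) ↔
      (f = 0) ∨
      (∃ (χ : S → ℂ) (lam : ℂ),
        (∀ x y : S, χ (x * y) = χ x * χ y) ∧ lam ≠ 0 ∧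
        χ ≠ (fun x => χ (σ x)) ∧
        (∀ x : S, f x = lam * χ x) ∧
        (∀ x : S, g x = (χ x - χ (σ x)) / 2)) := by
  constructor
  · intro h
    by_cases hf : f = 0
    · exact Or.inl hf
    right
    obtain ⟨x0, hx0⟩ := Function.ne_iff.mp hf
    obtain ⟨z0, hz0⟩ := Function.ne_iff.mp hg
    simp only [Pi.zero_apply] at hx0 hz0
    have hB : ∀ x y z : S, f x * g (y*z) = f (x*y) * g z + f (σ z * x) * g y := by
      intro x y z
      have h1 := h x (y*z)
      have h2 := h (x*y) z
      have h3 := h (σ z * x) y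
      rw [hσmul] at h1
      simp only [mul_assoc] at h1 h2 h3
      linear_combination (h2 + h3 - h1)/2
    have hA : ∀ x y z : S, f x * (g (y*z) + g (z*y))
        = g z * (f (x*y) + f (σ y * x)) + g y * (f (x*z) + f (σ z * x)) := by
      intro x y z; linear_combination hB x y z + hB x z y
    have hFz0 : ∀ x, g z0 * (f (x*z0) + f (σ z0 * x)) = f x * g (z0*z0) := by
      intro x; linear_combination -(hA x z0 z0)/2
    obtain ⟨φ, hφ⟩ : ∃ φ : S → ℂ, ∀ y,
        φ y = (g z0 * (g (y*z0) + g (z0*y)) - g y * g (z0*z0))/(g z0 * g z0) := ⟨_, fun _ => rfl⟩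
    have hsum : ∀ x y, f (x*y) + f (σ y * x) = f x * φ y := by
      intro x y
      have h1 := hA x y z0
      have h2 := hFz0 x
      rw [hφ y]
      field_simp
      linear_combination -g z0 * h1 - g y * h2
    obtain ⟨χ, hχdef⟩ : ∃ χ : S → ℂ, ∀ y, χ y = φ y / 2 + g y := ⟨_, fun _ => rfl⟩
    obtain ⟨ψ, hψdef⟩ : ∃ ψ : S → ℂ, ∀ y, ψ y = φ y / 2 - g y := ⟨_, fun _ => rfl⟩
    have hχ : ∀ x y, f (x*y) = f x * χ y := by
      intro x y
      rw [hχdef y]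
      linear_combination (hsum x y)/2 + (h x y)/2
    have hψ : ∀ x y, f (σ y * x) = f x * ψ y := by
      intro x y
      rw [hψdef y]
      linear_combination (hsum x y)/2 - (h x y)/2
    have hleft : ∀ x y, f (x*y) = f y * ψ (σ x) := by
      intro x y
      have := hψ y (σ x)
      rwa [hσinv] at this
    have hχmul : ∀ y z : S, χ (y*z) = χ y * χ z := by
      intro y z
      have e1 : f x0 * χ (y*z) = f x0 * (χ y * χ z) := by
        rw [← hχ x0 (y*z), ← mul_assoc _ (χ y), ← hχ x0 y, ← hχ (x0*y) z, mul_assoc]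
      exact mul_left_cancel₀ hx0 e1
    have hkey : ∀ x y, f x * χ y = f y * ψ (σ x) := by
      intro x y; rw [← hχ x y, hleft x y]
    by_cases hχ0 : χ x0 = 0
    · exfalso
      have hψ0 : ψ (σ x0) = 0 := by
        have := hkey x0 x0
        rw [hχ0, mul_zero] at this
        have := (mul_eq_zero.mp this.symm).resolve_left hx0
        exact this
      have hχall : ∀ y, χ y = 0 := by
        intro y
        have := hkey x0 y
        rw [hψ0, mul_zero] at this
        exact (mul_eq_zero.mp this).resolve_left hx0
      have hfprod : ∀ x y : S, f (x*y) = 0 := by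
        intro x y; rw [hχ x y, hχall, mul_zero]
      have hgall : ∀ y, g y = 0 := by
        intro y
        have := h x0 y
        rw [hfprod x0 y, hfprod (σ y) x0] at this
        have h2 : 2 * f x0 * g y = 0 := by linear_combination -this
        exact (mul_eq_zero.mp h2).resolve_left (mul_ne_zero two_ne_zero hx0)
      exact hg (funext hgall)
    · have hψx0 : ψ (σ x0) = χ x0 := by
        have := hkey x0 x0
        exact (mul_left_cancel₀ hx0 this).symm
      obtain ⟨lam, hlam⟩ : ∃ lam : ℂ, lam = f x0 / χ x0 := ⟨_, rfl⟩
      have hflam : ∀ y, f y = lam * χ y := by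
        intro y
        have hk := hkey x0 y
        rw [hψx0] at hk
        rw [hlam, div_mul_eq_mul_div, eq_div_iff hχ0]
        linear_combination -hk
      have hlam0 : lam ≠ 0 := by
        intro h0
        apply hx0
        rw [hflam x0, h0, zero_mul]
      have hgform : ∀ y, g y = (χ y - χ (σ y)) / 2 := by
        intro y
        have hh := h x0 y
        rw [hχ x0 y, hflam (σ y * x0), hχmul (σ y) x0, hflam x0] at hh
        have key : lam * χ x0 * (g y - (χ y - χ (σ y)) / 2) = 0 := by
          linear_combination -hh/2
        have h2 := (mul_eq_zero.mp key).resolve_left (mul_ne_zero hlam0 hχ0)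
        linear_combination h2
      refine ⟨χ, lam, hχmul, hlam0, ?_, hflam, hgform⟩
      intro hEq
      apply hg
      funext y
      have : χ y = χ (σ y) := congrFun hEq y
      rw [Pi.zero_apply, hgform y, this, sub_self, zero_div]
  · rintro (hf | ⟨χ, lam, hχmul, hlam, hne, hflam, hgform⟩)
    · subst hf; intro x y; simp
    · intro x y
      rw [hflam (x*y), hflam (σ y * x), hflam x, hχmul x y, hχmul (σ y) x, hgform y]
      ring
end

section
/- Let S be a semigroup and σ : S → S an involutive automorphism. The only function f : S → ℂ satisfying f(xy) − f(σ(y)x) = 2 f(x) f(y) for all x, y ∈ S is f = 0. -/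
/-- The only solution `f : S → ℂ` of `f(xy) - f(σ(y)x) = 2 f(x) f(y)` is `f = 0`. -/
theorem van_vleck_dalembert_only_zero {S : Type*} [Semigroup S] (σ : S → S)
    (hσmul : ∀ x y : S, σ (x * y) = σ x * σ y) (hσinv : ∀ x : S, σ (σ x) = x)
    (f : S → ℂ) :
    (∀ x y : S, f (x * y) - f (σ y * x) = 2 * f x * f y) ↔ f = 0 := by
  constructor
  · intro hE
    -- key1 : f(σ(xy)) - f(xy) = 2 f(σx)(f(σy)+f(y))
    have key1 : ∀ x y : S, f (σ (x * y)) - f (x * y)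
        = 2 * f (σ x) * (f (σ y) + f y) := by
      intro x y
      have h1 := hE (σ x) (σ y)
      rw [hσinv] at h1
      have h2 := hE y (σ x)
      rw [hσinv] at h2
      rw [hσmul]
      linear_combination h1 + h2
    -- key2 : f(xy) - f(σ(xy)) = 2 f(x)(f(y)+f(σy))
    have key2 : ∀ x y : S, f (x * y) - f (σ (x * y))
        = 2 * f x * (f y + f (σ y)) := by
      intro x y
      have h := key1 (σ x) (σ y)
      rw [hσinv, hσinv, ← hσmul, hσinv] at h
      exact h
    -- hence (f(σx)+f(x))(f(σy)+f(y)) = 0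
    have hprod : ∀ x y : S, (f (σ x) + f x) * (f (σ y) + f y) = 0 := by
      intro x y
      have := key1 x y
      have := key2 x y
      linear_combination -(key1 x y + key2 x y) / 2
    have hanti : ∀ x : S, f (σ x) = - f x := by
      intro x
      exact eq_neg_of_add_eq_zero_left (mul_self_eq_zero.mp (hprod x x))
    have hmulzero : ∀ x y : S, f (x * y) = 0 := by
      intro x y
      have h := key1 x y
      rw [hanti, hanti, hanti] at h
      linear_combination -h / 2
    funext x
    have h := hE x x
    rw [hmulzero, hmulzero] at h
    have : f x * f x = 0 := by linear_combination -h / 2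
    simpa using mul_self_eq_zero.mp this
  · intro h
    subst h
    intro x y
    simp
end

section
/- Let S be a semigroup and σ : S → S an involutive automorphism. If f, g : S → ℂ satisfy f(xy) − f(σ(y)x) = 2 f(x) g(y) for all x, y ∈ S, then the odd part f° := (f − f ∘ σ)/2 satisfies f°(xy) = f(x) g(y) + f(σ(y)) g(x) for all x, y ∈ S. -/
/-- If `f(xy) - f(σ(y)x) = 2 f(x) g(y)`, then the odd part
`f°(x) = (f(x) - f(σ(x)))/2` satisfies `f°(xy) = f(x) g(y) + f(σ(y)) g(x)`. -/
theorem van_vleck_odd_part_identity {S : Type*} [Semigroup S] (σ : S → S)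
    (hσmul : ∀ x y : S, σ (x * y) = σ x * σ y) (hσinv : ∀ x : S, σ (σ x) = x)
    (f g : S → ℂ)
    (heq : ∀ x y : S, f (x * y) - f (σ y * x) = 2 * f x * g y) :
    ∀ x y : S, (f (x * y) - f (σ (x * y))) / 2 = f x * g y + f (σ y) * g x := by
  intro x y
  have h1 := heq x y
  have h2 := heq (σ y) x
  rw [hσmul]
  linear_combination h1 / 2 + h2 / 2
end

section
/- Let S be a semigroup and σ : S → S an involutive automorphism. If f, g : S → ℂ satisfy f(xy) − f(σ(y)x) = 2 f(x) g(y) for all x, y ∈ S, then for all x, y ∈ S: f^e(x) g^e(y) + f^e(y) g^e(x) = 0 and f°(y) g°(x) − f°(x) g°(y) = 0, where f^e := (f + f ∘ σ)/2, f° := (f − f ∘ σ)/2, and similarly for g. -/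
/-- If `f(xy) - f(σ(y)x) = 2 f(x) g(y)`, then the even and odd parts of `f` and
`g` satisfy `fᵉ(x) gᵉ(y) + fᵉ(y) gᵉ(x) = 0` and `f°(y) g°(x) - f°(x) g°(y) = 0`. -/
theorem van_vleck_even_odd_identities {S : Type*} [Semigroup S] (σ : S → S)
    (hσmul : ∀ x y : S, σ (x * y) = σ x * σ y) (hσinv : ∀ x : S, σ (σ x) = x)
    (f g : S → ℂ)
    (heq : ∀ x y : S, f (x * y) - f (σ y * x) = 2 * f x * g y) :
    ∀ x y : S,
      ((f x + f (σ x)) / 2) * ((g y + g (σ y)) / 2) +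
        ((f y + f (σ y)) / 2) * ((g x + g (σ x)) / 2) = 0 ∧
      ((f y - f (σ y)) / 2) * ((g x - g (σ x)) / 2) -
        ((f x - f (σ x)) / 2) * ((g y - g (σ y)) / 2) = 0 := by
  intro x y
  have h1 := heq (σ x) (σ y)
  have h2 := heq x y
  have h5 := heq (σ y) x
  have h6 := heq y (σ x)
  have h3 := heq (σ x) y
  have h4 := heq y x
  have h7 := heq x (σ y)
  have h8 := heq (σ y) (σ x)
  simp only [hσinv] at h1 h6 h7 h8
  constructor
  · linear_combination (-(h1 + h2 + h3 + h4 + h5 + h6 + h7 + h8)) / 8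
  · linear_combination (h1 + h2 + h5 + h6 - h3 - h4 - h7 - h8) / 8
end

section
/- Let S be a semigroup, σ : S → S an involutive automorphism, and μ a finite linear combination of Dirac measures at central points, given by a finite index set I, constants c_i ∈ ℂ, and elements z_i ∈ Z(S). Suppose f, g : S → ℂ satisfy ∑_{i∈I} c_i f(x y z_i) − ∑_{i∈I} c_i f(σ(y) x z_i) = 2 f(x) g(y) for all x, y ∈ S, with f ≠ 0 and g ≠ 0, and suppose ∑_{i∈I} c_i g(z_i) ≠ 0. Define F(x) := (∑_{i∈I} c_i f(x z_i)) / (∑_{j∈I} c_j g(z_j)) and G₁(x) := (∑_{i∈I} c_i g(x z_i) − ∑_{i∈I} c_i g(x σ(z_i))) / (2 ∑_{j∈I} c_j g(z_j)). Then F ≠ 0, G₁ ≠ 0, and F(xy) + F(σ(y)x) = 2 F(x) G₁(y) for all x, y ∈ S. -/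
/-!
Integrating the equation in `y` against `μ` and against its image under `σ` and subtracting
shows that `f` itself satisfies Wilson's equation `f(xy) + f(σ(y)x) = 2 f(x) G₁(y)`; since the
points `zᵢ` are central, so does every `μ`-translate of `f`, in particular `F`. Integrating
the equation at `y = zᵢ` recovers `f` from its `μ`-translate, so `F ≠ 0`. If `G₁ = 0`, then
`f(σ(y)x) = -f(xy)`, which forces `f` to be a multiple of an odd `g` with
`∫ g(xyt) dμ(t) = g(x) g(y)`; evaluating at `σ(y)σ(y)` then gives `g(y)² = -g(y)²`.
-/

namespace VanVleckWilson

open Function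

variable {S : Type*} {ι : Type*} [Fintype ι] {c : ι → ℂ} {z : ι → S} {σ : S → S}

/-- `∫ φ dμ` for `μ = ∑ᵢ cᵢ δ_{zᵢ}`. -/
def diracIntegral (c : ι → ℂ) (z : ι → S) (φ : S → ℂ) : ℂ := ∑ i, c i * φ (z i)

lemma diracIntegral_const_mul (a : ℂ) (φ : S → ℂ) :
    diracIntegral c z (fun t => a * φ t) = a * diracIntegral c z φ := by
  simp only [diracIntegral, Finset.mul_sum]
  exact Finset.sum_congr rfl fun _ _ => by ring

lemma diracIntegral_neg (φ : S → ℂ) :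
    diracIntegral c z (fun t => -φ t) = -diracIntegral c z φ := by
  simpa using diracIntegral_const_mul (c := c) (z := z) (-1) φ

lemma diracIntegral_congr {φ ψ : S → ℂ} (h : ∀ i, φ (z i) = ψ (z i)) :
    diracIntegral c z φ = diracIntegral c z ψ :=
  Finset.sum_congr rfl fun i _ => by rw [h i]

lemma diracIntegral_sub_diracIntegral {φ ψ χ : S → ℂ} (h : ∀ i, φ (z i) - ψ (z i) = χ (z i)) :
    diracIntegral c z φ - diracIntegral c z ψ = diracIntegral c z χ := by
  rw [diracIntegral, diracIntegral, ← Finset.sum_sub_distrib]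
  exact Finset.sum_congr rfl fun i _ => by rw [← h i]; ring

lemma diracIntegral_add_diracIntegral {φ ψ χ : S → ℂ} (h : ∀ i, φ (z i) + ψ (z i) = χ (z i)) :
    diracIntegral c z φ + diracIntegral c z ψ = diracIntegral c z χ := by
  rw [diracIntegral, diracIntegral, ← Finset.sum_add_distrib]
  exact Finset.sum_congr rfl fun i _ => by rw [← h i]; ring

lemma exists_eq_const_mul_of_skew {f g : S → ℂ} (hskew : ∀ x y, f (σ y) * g x = -(f x * g y))
    (hf : f ≠ 0) (hg : g ≠ 0) : ∃ l ≠ 0, f = fun x => l * g x := by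
  obtain ⟨y, hy⟩ : ∃ y, g y ≠ 0 := ne_iff.mp hg
  have hfg : f = fun x => -f (σ y) / g y * g x := funext fun x => by
    field_simp
    linear_combination hskew x y
  refine ⟨-f (σ y) / g y, fun hl => hf ?_, hfg⟩
  rw [hfg, hl]
  exact funext fun x => zero_mul (g x)

lemma map_neg_of_skew {g : S → ℂ} (hskew : ∀ x y, g (σ y) * g x = -(g x * g y)) (hg : g ≠ 0)
    (y : S) : g (σ y) = -g y := by
  obtain ⟨x, hx⟩ : ∃ x, g x ≠ 0 := ne_iff.mp hg
  exact mul_right_cancel₀ hx (by linear_combination hskew x y)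

variable [Semigroup S]

lemma comm_map_of_comm (hσ : ∀ x y, σ (x * y) = σ x * σ y) (hσsurj : Surjective σ) {a : S}
    (ha : ∀ x, x * a = a * x) (x : S) : x * σ a = σ a * x := by
  obtain ⟨x, rfl⟩ := hσsurj x
  rw [← hσ, ha, hσ]

def IsWilsonSolution (σ : S → S) (f G : S → ℂ) : Prop :=
  ∀ x y, f (x * y) + f (σ y * x) = 2 * f x * G y

lemma IsWilsonSolution.const_mul {f G : S → ℂ} (hw : IsWilsonSolution σ f G) (a : ℂ) :
    IsWilsonSolution σ (fun x => a * f x) G := fun x y => by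
  linear_combination a * hw x y

lemma IsWilsonSolution.translate {f G : S → ℂ} (hw : IsWilsonSolution σ f G)
    (hz : ∀ i x, x * z i = z i * x) :
    IsWilsonSolution σ (fun x => diracIntegral c z (fun t => f (x * t))) G := fun x y => by
  change diracIntegral c z _ + diracIntegral c z _ = 2 * diracIntegral c z _ * G y
  rw [diracIntegral_add_diracIntegral (χ := fun t => 2 * G y * f (x * t)), diracIntegral_const_mul]
  · ring
  · intro i
    rw [mul_assoc x, hz i y, ← mul_assoc, mul_assoc (σ y)]
    linear_combination hw (x * z i) y

def IsVanVleckSolution (σ : S → S) (c : ι → ℂ) (z : ι → S) (f g : S → ℂ) : Prop :=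
  ∀ x y, diracIntegral c z (fun t => f (x * y * t)) - diracIntegral c z (fun t => f (σ y * x * t))
    = 2 * f x * g y

lemma translate_map_mul_of_anti {f : S → ℂ} (hz : ∀ i x, x * z i = z i * x)
    (hanti : ∀ x y, f (σ y * x) = -f (x * y)) (x y : S) :
    diracIntegral c z (fun t => f (σ y * x * t)) = -diracIntegral c z (fun t => f (x * y * t)) := by
  rw [← diracIntegral_neg]
  refine diracIntegral_congr fun i => ?_
  rw [mul_assoc, hanti, mul_assoc, mul_assoc, hz]

lemma eq_zero_of_map_neg_of_translate_mul {g : S → ℂ}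
    (hσmul : ∀ x y, σ (x * y) = σ x * σ y) (hσinv : ∀ x, σ (σ x) = x)
    (hodd : ∀ y, g (σ y) = -g y)
    (hmul : ∀ x y, diracIntegral c z (fun t => g (x * y * t)) = g x * g y)
    (hsym : ∀ y, diracIntegral c z (fun t => g (y * t)) =
      diracIntegral c z (fun t => g (y * σ t))) : g = 0 := by
  funext y
  have h : g y * g y = -(g y * g y) := calc
    g y * g y = g (σ y) * g (σ y) := by rw [hodd]; ring
    _ = diracIntegral c z (fun t => g (σ y * σ y * t)) := (hmul _ _).symm
    _ = diracIntegral c z (fun t => -g (y * y * σ t)) :=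
      diracIntegral_congr fun i => by rw [← hodd, hσmul, hσmul, hσinv]
    _ = -(g y * g y) := by rw [diracIntegral_neg, ← hsym, hmul]
  exact mul_self_eq_zero.mp (by linear_combination h / 2)

namespace IsVanVleckSolution

variable {f g : S → ℂ}

lemma diracIntegral_diracIntegral_sub (hvv : IsVanVleckSolution σ c z f g)
    (hzσ : ∀ i x, x * σ (z i) = σ (z i) * x) (u : S) :
    diracIntegral c z (fun s => diracIntegral c z (fun t => f (u * s * t))) -
      diracIntegral c z (fun s => diracIntegral c z (fun t => f (u * σ s * t)))
      = 2 * diracIntegral c z g * f u := by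
  rw [diracIntegral_sub_diracIntegral (χ := fun s => 2 * f u * g s), diracIntegral_const_mul]
  · ring
  · intro i
    rw [hzσ i u]
    exact hvv u (z i)

lemma diracIntegral_mul_add_eq (hvv : IsVanVleckSolution σ c z f g)
    (hσmul : ∀ x y, σ (x * y) = σ x * σ y) (hσinv : ∀ x, σ (σ x) = x)
    (hz : ∀ i x, x * z i = z i * x) (hzσ : ∀ i x, x * σ (z i) = σ (z i) * x) (x y : S) :
    diracIntegral c z g * (f (x * y) + f (σ y * x)) =
      f x * (diracIntegral c z (fun t => g (y * t)) -
        diracIntegral c z (fun t => g (y * σ t))) := by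
  have hμ : diracIntegral c z (fun s => diracIntegral c z (fun t => f (x * y * s * t))) -
      diracIntegral c z (fun s => diracIntegral c z (fun t => f (σ y * x * σ s * t)))
      = 2 * f x * diracIntegral c z (fun s => g (y * s)) := by
    rw [← diracIntegral_const_mul]
    refine diracIntegral_sub_diracIntegral fun i => ?_
    have e : σ y * x * σ (z i) = σ (y * z i) * x := by
      rw [mul_assoc, hzσ, ← mul_assoc, hσmul]
    rw [e, mul_assoc x y]
    exact hvv x (y * z i)
  have hσμ : diracIntegral c z (fun s => diracIntegral c z (fun t => f (x * y * σ s * t))) -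
      diracIntegral c z (fun s => diracIntegral c z (fun t => f (σ y * x * s * t)))
      = 2 * f x * diracIntegral c z (fun s => g (y * σ s)) := by
    rw [← diracIntegral_const_mul]
    refine diracIntegral_sub_diracIntegral fun i => ?_
    have e : σ y * x * z i = σ (y * σ (z i)) * x := by
      rw [mul_assoc, hz, ← mul_assoc, hσmul, hσinv]
    rw [e, mul_assoc x y]
    exact hvv x (y * σ (z i))
  linear_combination (hμ - hσμ - hvv.diracIntegral_diracIntegral_sub hzσ (x * y)
    - hvv.diracIntegral_diracIntegral_sub hzσ (σ y * x)) / 2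

lemma isWilsonSolution (hvv : IsVanVleckSolution σ c z f g)
    (hσmul : ∀ x y, σ (x * y) = σ x * σ y) (hσinv : ∀ x, σ (σ x) = x)
    (hz : ∀ i x, x * z i = z i * x) (hzσ : ∀ i x, x * σ (z i) = σ (z i) * x)
    (hD : diracIntegral c z g ≠ 0) :
    IsWilsonSolution σ f (fun y =>
      (diracIntegral c z (fun t => g (y * t)) - diracIntegral c z (fun t => g (y * σ t))) /
        (2 * diracIntegral c z g)) := fun x y => by
  field_simp
  linear_combination hvv.diracIntegral_mul_add_eq hσmul hσinv hz hzσ x y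

lemma eq_zero_of_translate_eq_zero (hvv : IsVanVleckSolution σ c z f g)
    (hzσ : ∀ i x, x * σ (z i) = σ (z i) * x) (hD : diracIntegral c z g ≠ 0)
    (h : ∀ x, diracIntegral c z (fun t => f (x * t)) = 0) : f = 0 := by
  funext u
  have h2 := hvv.diracIntegral_diracIntegral_sub hzσ u
  simp only [h, sub_self] at h2
  simpa [hD] using h2.symm

lemma translate_mul_of_anti (hvv : IsVanVleckSolution σ c z f g) (hz : ∀ i x, x * z i = z i * x)
    (hanti : ∀ x y, f (σ y * x) = -f (x * y)) (x y : S) :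
    diracIntegral c z (fun t => f (x * y * t)) = f x * g y := by
  have h := hvv x y
  rw [translate_map_mul_of_anti hz hanti] at h
  linear_combination h / 2

lemma exists_translate_ne_translate_map (hvv : IsVanVleckSolution σ c z f g)
    (hσmul : ∀ x y, σ (x * y) = σ x * σ y) (hσinv : ∀ x, σ (σ x) = x)
    (hz : ∀ i x, x * z i = z i * x) (hzσ : ∀ i x, x * σ (z i) = σ (z i) * x)
    (hf : f ≠ 0) (hg : g ≠ 0) (hD : diracIntegral c z g ≠ 0) :
    ∃ y, diracIntegral c z (fun t => g (y * t)) ≠ diracIntegral c z (fun t => g (y * σ t)) := by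
  by_contra! hsym
  have hanti : ∀ x y, f (σ y * x) = -f (x * y) := fun x y => by
    have h := hvv.diracIntegral_mul_add_eq hσmul hσinv hz hzσ x y
    rw [hsym y, sub_self, mul_zero] at h
    linear_combination (mul_eq_zero.mp h).resolve_left hD
  have hmulf := hvv.translate_mul_of_anti hz hanti
  have hskew : ∀ x y, f (σ y) * g x = -(f x * g y) := fun x y => by
    rw [← hmulf, ← hmulf, translate_map_mul_of_anti hz hanti]
  obtain ⟨l, hl, rfl⟩ := exists_eq_const_mul_of_skew hskew hf hg
  have hmulg : ∀ x y, diracIntegral c z (fun t => g (x * y * t)) = g x * g y := fun x y =>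
    mul_left_cancel₀ hl (by rw [← diracIntegral_const_mul, hmulf]; ring)
  have hskewg : ∀ x y, g (σ y) * g x = -(g x * g y) := fun x y =>
    mul_left_cancel₀ (mul_ne_zero hl hl) (by linear_combination l * hskew x y)
  exact hg (eq_zero_of_map_neg_of_translate_mul hσmul hσinv (map_neg_of_skew hskewg hg) hmulg hsym)

end IsVanVleckSolution

end VanVleckWilson

open VanVleckWilson

/-- Lemma: if `(f, g)` solves the Van Vleck–Wilson equation with `f ≠ 0`, `g ≠ 0`
and `∑ᵢ cᵢ g(zᵢ) ≠ 0`, then with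
`F(x) = (∑ᵢ cᵢ f(x zᵢ)) / ∑ⱼ cⱼ g(zⱼ)` and
`G₁(x) = (∑ᵢ cᵢ g(x zᵢ) - ∑ᵢ cᵢ g(x σ(zᵢ))) / (2 ∑ⱼ cⱼ g(zⱼ))`
one has `F ≠ 0`, `G₁ ≠ 0` and `F(xy) + F(σ(y)x) = 2 F(x) G₁(y)`. -/
theorem van_vleck_wilson_reduction {S : Type*} [Semigroup S] (σ : S → S)
    (hσmul : ∀ x y : S, σ (x * y) = σ x * σ y) (hσinv : ∀ x : S, σ (σ x) = x)
    {ι : Type*} [Fintype ι] (c : ι → ℂ) (z : ι → S)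
    (hz : ∀ (i : ι) (x : S), x * z i = z i * x)
    (f g : S → ℂ) (hf : f ≠ 0) (hg : g ≠ 0)
    (heq : ∀ x y : S,
      (∑ i, c i * f (x * y * z i)) - (∑ i, c i * f (σ y * x * z i)) = 2 * f x * g y)
    (hgz : (∑ j, c j * g (z j)) ≠ 0)
    (F G₁ : S → ℂ)
    (hF : ∀ x : S, F x = (∑ i, c i * f (x * z i)) / (∑ j, c j * g (z j)))
    (hG₁ : ∀ x : S, G₁ x =
      ((∑ i, c i * g (x * z i)) - (∑ i, c i * g (x * σ (z i)))) /
        (2 * ∑ j, c j * g (z j))) :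
    F ≠ 0 ∧ G₁ ≠ 0 ∧ ∀ x y : S, F (x * y) + F (σ y * x) = 2 * F x * G₁ y := by
  have hvv : IsVanVleckSolution σ c z f g := heq
  have hD : diracIntegral c z g ≠ 0 := hgz
  have hzσ : ∀ i x, x * σ (z i) = σ (z i) * x := fun i =>
    comm_map_of_comm hσmul (Function.Involutive.surjective hσinv) (hz i)
  obtain rfl : F = fun x => (diracIntegral c z g)⁻¹ * diracIntegral c z (fun t => f (x * t)) :=
    funext fun x => (hF x).trans (div_eq_inv_mul _ _)
  obtain rfl : G₁ = fun y => (diracIntegral c z (fun t => g (y * t)) -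
      diracIntegral c z (fun t => g (y * σ t))) / (2 * diracIntegral c z g) := funext hG₁
  refine ⟨fun hF0 => hf ?_, fun hG0 => ?_,
    ((hvv.isWilsonSolution hσmul hσinv hz hzσ hD).translate hz).const_mul _⟩
  · refine hvv.eq_zero_of_translate_eq_zero hzσ hD fun x => ?_
    simpa [hD] using congrFun hF0 x
  · obtain ⟨y, hy⟩ := hvv.exists_translate_ne_translate_map hσmul hσinv hz hzσ hf hg hD
    refine hy (sub_eq_zero.mp ?_)
    simpa [hD] using congrFun hG0 y
end

section
/- Let S be a monoid with neutral element e, σ : S → S an involutive automorphism, and μ a finite linear combination of Dirac measures at central points, given by a finite index set I, constants c_i ∈ ℂ, and elements z_i ∈ Z(S). Suppose f, g : S → ℂ satisfy ∑_{i∈I} c_i f(x y z_i) + ∑_{i∈I} c_i f(σ(y) x z_i) = 2 f(x) g(y) for all x, y ∈ S. Then ∑_{i∈I} c_i f(x z_i) = f(x) g(e) for all x ∈ S; moreover, if g(e) = 0 then f = 0 or g = 0, and if g(e) ≠ 0 then f(xy) + f(σ(y)x) = 2 f(x) g(y)/g(e) for all x, y ∈ S. -/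
/-- On a monoid, the Kannappan–Wilson equation reduces to the Wilson variant:
`∑ᵢ cᵢ f(x zᵢ) = f(x) g(1)`; if `g(1) = 0` then `f = 0` or `g = 0`, and if
`g(1) ≠ 0` then `f(xy) + f(σ(y)x) = 2 f(x) g(y)/g(1)`. -/
theorem kannappan_wilson_monoid_reduction {S : Type*} [Monoid S] (σ : S → S)
    (hσmul : ∀ x y : S, σ (x * y) = σ x * σ y) (hσinv : ∀ x : S, σ (σ x) = x)
    {ι : Type*} [Fintype ι] (c : ι → ℂ) (z : ι → S)
    (hz : ∀ (i : ι) (x : S), x * z i = z i * x)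
    (f g : S → ℂ)
    (heq : ∀ x y : S,
      (∑ i, c i * f (x * y * z i)) + (∑ i, c i * f (σ y * x * z i)) = 2 * f x * g y) :
    (∀ x : S, (∑ i, c i * f (x * z i)) = f x * g 1) ∧
    (g 1 = 0 → f = 0 ∨ g = 0) ∧
    (g 1 ≠ 0 → ∀ x y : S, f (x * y) + f (σ y * x) = 2 * f x * (g y / g 1)) := by
  have hσ1 : σ 1 = 1 := by
    have h2 := hσmul (σ 1) 1
    rw [mul_one, hσinv, one_mul] at h2
    exact h2.symm
  have key : ∀ x : S, (∑ i, c i * f (x * z i)) = f x * g 1 := by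
    intro x
    have h := heq x 1
    simp only [mul_one, hσ1, one_mul] at h
    linear_combination h / 2
  refine ⟨key, ?_, ?_⟩
  · intro hg1
    by_cases hf : f = 0
    · exact Or.inl hf
    · right
      obtain ⟨x₀, hx₀⟩ := Function.ne_iff.mp hf
      funext y
      have h := heq x₀ y
      rw [key (x₀ * y), key (σ y * x₀), hg1, mul_zero, mul_zero, add_zero] at h
      simp only [Pi.zero_apply]
      rcases mul_eq_zero.mp h.symm with h' | h'
      · rcases mul_eq_zero.mp h' with h'' | h''
        · exact absurd h'' two_ne_zero
        · exact absurd h'' hx₀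
      · exact h'
  · intro hg1 x y
    have h := heq x y
    rw [key (x * y), key (σ y * x)] at h
    field_simp
    linear_combination h
end
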